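/- arXiv:2408.10546 — 10 statements merged into one kernel-verified Lean document; each statement's English description precedes it below -/
import Mathlib

section
/- Let A be a commutative ring, M: I → A-Alg a filtered system of A-algebras with colimit B. Then the natural map colim_i (Ω_{M(i)/A} ⊗_{M(i)} B) → Ω_{B/A} is an isomorphism of B-modules. -/
open TensorProduct

set_option linter.unusedSectionVars false

section aux
variable (A B R S T : Type*) [CommRing A] [CommRing B] [CommRing R] [CommRing S] [CommRing T]
  [Algebra A R] [Algebra A S] [Algebra A B] [Algebra A T]
  [Algebra R S] [IsScalarTower A R S]
  [Algebra R B] [IsScalarTower A R B]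
  [Algebra S B] [IsScalarTower A S B]
  [IsScalarTower R S B]

lemma aux_map_map [Algebra S T] [IsScalarTower A S T] [Algebra R T] [IsScalarTower A R T]
    [IsScalarTower R S T] (ω : Ω[R⁄A]) :
    KaehlerDifferential.map A A S T (KaehlerDifferential.map A A R S ω)
      = KaehlerDifferential.map A A R T ω := by
  have hω : ω ∈ Submodule.span R (Set.range (KaehlerDifferential.D A R)) := by
    rw [KaehlerDifferential.span_range_derivation]; trivial
  induction hω using Submodule.span_induction with
  | mem x hx =>
      obtain ⟨x, rfl⟩ := hx
      rw [KaehlerDifferential.map_D, KaehlerDifferential.map_D, KaehlerDifferential.map_D,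
        ← IsScalarTower.algebraMap_apply]
  | zero => simp
  | add x y _ _ hx hy => simp [hx, hy]
  | smul r x _ hx =>
      rw [map_smul, ← algebraMap_smul S r (KaehlerDifferential.map A A R S x), map_smul,
        algebraMap_smul, map_smul, hx]

/-- the transfer map `B ⊗[R] Ω[R⁄A] →ₗ[B] B ⊗[S] Ω[S⁄A]`, `b ⊗ ω ↦ b ⊗ map ω`. -/
noncomputable def transferAux : (B ⊗[R] Ω[R⁄A]) →ₗ[B] (B ⊗[S] Ω[S⁄A]) := by
  refine
    { toFun := TensorProduct.liftAddHom
        { toFun := fun b =>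
            ((TensorProduct.mk S B (Ω[S⁄A]) b).toAddMonoidHom.comp
              (KaehlerDifferential.map A A R S).toAddMonoidHom)
          map_zero' := by ext ω; simp
          map_add' := by intro b₁ b₂; ext ω; simp [TensorProduct.add_tmul] }
        (fun r b ω => ?_)
      map_add' := fun x y => map_add _ x y
      map_smul' := fun b z => ?_ }
  · show (r • b) ⊗ₜ[S] (KaehlerDifferential.map A A R S ω)
        = b ⊗ₜ[S] (KaehlerDifferential.map A A R S (r • ω))
    rw [map_smul, ← algebraMap_smul S r (KaehlerDifferential.map A A R S ω),
      tmul_smul, smul_tmul', algebraMap_smul]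
  · show _ = b • _
    induction z with
    | zero => simp
    | tmul b' ω => simp only [smul_tmul']; rfl
    | add z₁ z₂ h₁ h₂ =>
        simp only [smul_add, map_add] at *
        rw [h₁, h₂]

lemma transferAux_tmul (b : B) (ω : Ω[R⁄A]) :
    transferAux A B R S (b ⊗ₜ ω) = b ⊗ₜ (KaehlerDifferential.map A A R S ω) := rfl

lemma mapBaseChange_transferAux (z : B ⊗[R] Ω[R⁄A]) :
    KaehlerDifferential.mapBaseChange A S B (transferAux A B R S z)
      = KaehlerDifferential.mapBaseChange A R B z := by
  induction z with
  | zero => simp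
  | tmul b ω =>
      rw [transferAux_tmul, KaehlerDifferential.mapBaseChange_tmul,
        KaehlerDifferential.mapBaseChange_tmul, aux_map_map]
  | add z₁ z₂ h₁ h₂ => simp [h₁, h₂]

lemma transferAux_transferAux [Algebra S T] [IsScalarTower A S T] [Algebra R T]
    [IsScalarTower A R T] [IsScalarTower R S T] [Algebra T B] [IsScalarTower A T B]
    [IsScalarTower S T B] [IsScalarTower R T B] (z : B ⊗[R] Ω[R⁄A]) :
    transferAux A B S T (transferAux A B R S z) = transferAux A B R T z := by
  induction z with
  | zero => simp
  | tmul b ω => rw [transferAux_tmul, transferAux_tmul, transferAux_tmul, aux_map_map]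
  | add z₁ z₂ h₁ h₂ => simp [h₁, h₂]

end aux

section self
variable (A B R : Type*) [CommRing A] [CommRing B] [CommRing R]
  [Algebra A R] [Algebra A B] [Algebra R B] [IsScalarTower A R B]

lemma aux_map_id (ω : Ω[R⁄A]) : KaehlerDifferential.map A A R R ω = ω := by
  have hω : ω ∈ Submodule.span R (Set.range (KaehlerDifferential.D A R)) := by
    rw [KaehlerDifferential.span_range_derivation]; trivial
  induction hω using Submodule.span_induction with
  | mem x hx => obtain ⟨x, rfl⟩ := hx; simp
  | zero => simp
  | add x y _ _ hx hy => simp [hx, hy]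
  | smul r x _ hx => rw [map_smul, hx]

lemma transferAux_self (z : B ⊗[R] Ω[R⁄A])
    [inst : Algebra R R]
    [tw : @IsScalarTower A R R _ inst.toSMul _]
    [tw2 : @IsScalarTower R R B inst.toSMul _ _]
    (hid : ∀ r : R, @algebraMap R R _ _ inst r = r) :
    transferAux A B R R z = z := by
  obtain rfl : inst = Algebra.id R := Algebra.algebra_ext _ _ (fun r => (hid r).trans rfl)
  induction z with
  | zero => simp
  | tmul b ω => rw [transferAux_tmul, aux_map_id]
  | add z₁ z₂ h₁ h₂ => simp only [map_add, h₁, h₂]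

end self

set_option maxHeartbeats 2000000 in
open TensorProduct in
/-- Let `A` be a commutative ring and `M : I → A-Alg` a filtered system of `A`-algebras with
colimit `B` (a filtered/directed system `G` with transition maps `f`, together with compatible
maps `g i : G i → B` exhibiting `B` as the colimit).  Then the natural map
`colim_i (Ω[G i⁄A] ⊗_{G i} B) → Ω[B⁄A]` is an isomorphism of `B`-modules; concretely, the
compatible family of maps `B ⊗[G i] Ω[G i⁄A] →ₗ[B] Ω[B⁄A]` is jointly surjective, and any
element killed by one of them is already killed by some transition map of the system — which
is exactly the statement that the induced map from the filtered colimit is bijective. -/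
theorem stmt_0 {ι : Type*} [Preorder ι] [IsDirected ι (· ≤ ·)] [Nonempty ι]
    (A : Type*) [CommRing A]
    (G : ι → Type*) [∀ i, CommRing (G i)] [∀ i, Algebra A (G i)]
    (f : ∀ i j, i ≤ j → (G i →ₐ[A] G j))
    (hf_id : ∀ i (x : G i), f i i le_rfl x = x)
    (hf_comp : ∀ i j k (hij : i ≤ j) (hjk : j ≤ k) (x : G i),
      f j k hjk (f i j hij x) = f i k (hij.trans hjk) x)
    (B : Type*) [CommRing B] [Algebra A B]
    (g : ∀ i, G i →ₐ[A] B)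
    (hg : ∀ i j (h : i ≤ j), (g j).comp (f i j h) = g i)
    (hB_surj : ∀ b : B, ∃ i x, g i x = b)
    (hB_ker : ∀ i (x : G i), g i x = 0 → ∃ j h, f i j h x = 0) :
    (∀ ω : Ω[B⁄A], ∃ i : ι,
      letI : Algebra (G i) B := (g i).toRingHom.toAlgebra
      haveI : IsScalarTower A (G i) B :=
        IsScalarTower.of_algebraMap_eq (by exact fun x => ((g i).commutes x).symm)
      ∃ x : B ⊗[G i] Ω[G i⁄A], KaehlerDifferential.mapBaseChange A (G i) B x = ω) ∧
    (∀ (i : ι) (m : ℕ) (b : Fin m → B) (ω : Fin m → Ω[G i⁄A]),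
      letI : Algebra (G i) B := (g i).toRingHom.toAlgebra
      haveI : IsScalarTower A (G i) B :=
        IsScalarTower.of_algebraMap_eq (by exact fun x => ((g i).commutes x).symm)
      KaehlerDifferential.mapBaseChange A (G i) B (∑ k, b k ⊗ₜ[G i] ω k) = 0 →
        ∃ (j : ι) (h : i ≤ j),
          letI : Algebra (G i) (G j) := (f i j h).toRingHom.toAlgebra
          haveI : IsScalarTower A (G i) (G j) :=
            IsScalarTower.of_algebraMap_eq (by exact fun x => ((f i j h).commutes x).symm)
          letI : Algebra (G j) B := (g j).toRingHom.toAlgebra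
          ∑ k, b k ⊗ₜ[G j] (KaehlerDifferential.map A A (G i) (G j) (ω k)) = 0) := by
  classical
  letI aB : ∀ i, Algebra (G i) B := fun i => (g i).toRingHom.toAlgebra
  haveI tB : ∀ i, IsScalarTower A (G i) B := fun i =>
    IsScalarTower.of_algebraMap_eq (fun x => ((g i).commutes x).symm)
  let T : ∀ i j, i ≤ j → ((B ⊗[G i] Ω[G i⁄A]) →ₗ[B] (B ⊗[G j] Ω[G j⁄A])) := fun i j h =>
    letI : Algebra (G i) (G j) := (f i j h).toRingHom.toAlgebra
    haveI : IsScalarTower A (G i) (G j) :=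
      IsScalarTower.of_algebraMap_eq (fun x => ((f i j h).commutes x).symm)
    haveI : IsScalarTower (G i) (G j) B :=
      IsScalarTower.of_algebraMap_eq (fun x =>
        show g i x = g j (f i j h x) from (DFunLike.congr_fun (hg i j h) x).symm)
    transferAux A B (G i) (G j)
  haveI DS : DirectedSystem (fun i => B ⊗[G i] Ω[G i⁄A]) (fun i j h => T i j h) := by
    constructor
    · intro i z
      letI inst : Algebra (G i) (G i) := (f i i le_rfl).toRingHom.toAlgebra
      haveI tw : @IsScalarTower A (G i) (G i) _ inst.toSMul _ :=
        IsScalarTower.of_algebraMap_eq (fun x => ((f i i le_rfl).commutes x).symm)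
      haveI tw2 : @IsScalarTower (G i) (G i) B inst.toSMul _ _ :=
        IsScalarTower.of_algebraMap_eq (fun x =>
          show g i x = g i (f i i le_rfl x) from (DFunLike.congr_fun (hg i i le_rfl) x).symm)
      exact transferAux_self A B (G i) z (inst := inst) (tw := tw) (tw2 := tw2) (fun r => hf_id i r)
    · intro k j i hij hjk z
      letI a12 : Algebra (G i) (G j) := (f i j hij).toRingHom.toAlgebra
      letI a23 : Algebra (G j) (G k) := (f j k hjk).toRingHom.toAlgebra
      letI a13 : Algebra (G i) (G k) := (f i k (hij.trans hjk)).toRingHom.toAlgebra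
      haveI : IsScalarTower A (G i) (G j) :=
        IsScalarTower.of_algebraMap_eq (fun x => ((f i j hij).commutes x).symm)
      haveI : IsScalarTower A (G j) (G k) :=
        IsScalarTower.of_algebraMap_eq (fun x => ((f j k hjk).commutes x).symm)
      haveI : IsScalarTower A (G i) (G k) :=
        IsScalarTower.of_algebraMap_eq (fun x => ((f i k (hij.trans hjk)).commutes x).symm)
      haveI : IsScalarTower (G i) (G j) (G k) :=
        IsScalarTower.of_algebraMap_eq (fun x =>
          show f i k (hij.trans hjk) x = f j k hjk (f i j hij x) from
            (hf_comp i j k hij hjk x).symm)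
      haveI : IsScalarTower (G i) (G j) B :=
        IsScalarTower.of_algebraMap_eq (fun x =>
          show g i x = g j (f i j hij x) from (DFunLike.congr_fun (hg i j hij) x).symm)
      haveI : IsScalarTower (G j) (G k) B :=
        IsScalarTower.of_algebraMap_eq (fun x =>
          show g j x = g k (f j k hjk x) from (DFunLike.congr_fun (hg j k hjk) x).symm)
      haveI : IsScalarTower (G i) (G k) B :=
        IsScalarTower.of_algebraMap_eq (fun x =>
          show g i x = g k (f i k (hij.trans hjk) x) from
            (DFunLike.congr_fun (hg i k (hij.trans hjk)) x).symm)
      exact transferAux_transferAux A B (G i) (G j) (G k) z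
  let L := Module.DirectLimit (fun i => B ⊗[G i] Ω[G i⁄A]) (fun i j h => T i j h)
  let ofL : ∀ i, (B ⊗[G i] Ω[G i⁄A]) →ₗ[B] L := fun i =>
    Module.DirectLimit.of B ι (fun i => B ⊗[G i] Ω[G i⁄A]) (fun i j h => T i j h) i
  letI : Module A L := Module.compHom L (algebraMap A B)
  haveI : IsScalarTower A B L := IsScalarTower.of_algebraMap_smul (fun r x => rfl)
  -- transfer of a pure differential tensor
  have hT_tmul : ∀ (i j : ι) (h : i ≤ j) (c : B) (x : G i),
      T i j h (c ⊗ₜ[G i] KaehlerDifferential.D A (G i) x)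
        = c ⊗ₜ[G j] KaehlerDifferential.D A (G j) (f i j h x) := by
    intro i j h c x
    letI : Algebra (G i) (G j) := (f i j h).toRingHom.toAlgebra
    haveI : IsScalarTower A (G i) (G j) :=
      IsScalarTower.of_algebraMap_eq (fun x => ((f i j h).commutes x).symm)
    haveI : IsScalarTower (G i) (G j) B :=
      IsScalarTower.of_algebraMap_eq (fun x =>
        show g i x = g j (f i j h x) from (DFunLike.congr_fun (hg i j h) x).symm)
    show transferAux A B (G i) (G j) _ = _
    rw [transferAux_tmul, KaehlerDifferential.map_D]
    rfl
  have smul_one_tmul : ∀ (i : ι) (c : G i) (ω : Ω[G i⁄A]),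
      (1 : B) ⊗ₜ[G i] (c • ω) = (g i c) • ((1 : B) ⊗ₜ[G i] ω) := by
    intro i c ω
    rw [← smul_tmul, smul_tmul']
    congr 1
  -- the index and representative of an element of B
  let idx : B → ι := fun b => (hB_surj b).choose
  let rep : ∀ b, G (idx b) := fun b => (hB_surj b).choose_spec.choose
  have hrep : ∀ b, g (idx b) (rep b) = b := fun b => (hB_surj b).choose_spec.choose_spec
  let δ : B → L := fun b => ofL (idx b) ((1 : B) ⊗ₜ KaehlerDifferential.D A (G (idx b)) (rep b))
  have key : ∀ (i : ι) (x : G i),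
      ofL i ((1 : B) ⊗ₜ KaehlerDifferential.D A (G i) x) = δ (g i x) := by
    intro i x
    have key' : ∀ (i' : ι) (x' : G i'), g i x = g i' x' →
        ofL i ((1 : B) ⊗ₜ KaehlerDifferential.D A (G i) x)
          = ofL i' ((1 : B) ⊗ₜ KaehlerDifferential.D A (G i') x') := by
      intro i' x' hxx'
      obtain ⟨j, hij, hij'⟩ := exists_ge_ge i i'
      have hgf : ∀ (a b : ι) (h : a ≤ b) (y : G a), g b (f a b h y) = g a y := fun a b h y => by
        rw [← hg a b h]; rfl
      have hzero : g j (f i j hij x - f i' j hij' x') = 0 := by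
        rw [map_sub, hgf, hgf, hxx', sub_self]
      obtain ⟨k, hjk, hk⟩ := hB_ker j _ hzero
      rw [map_sub, sub_eq_zero, hf_comp, hf_comp] at hk
      calc ofL i ((1 : B) ⊗ₜ KaehlerDifferential.D A (G i) x)
          = ofL k (T i k (hij.trans hjk) ((1 : B) ⊗ₜ KaehlerDifferential.D A (G i) x)) :=
            (Module.DirectLimit.of_f (R := B) (hij := hij.trans hjk)).symm
        _ = ofL k ((1 : B) ⊗ₜ KaehlerDifferential.D A (G k) (f i k (hij.trans hjk) x)) := by
            rw [hT_tmul]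
        _ = ofL k ((1 : B) ⊗ₜ KaehlerDifferential.D A (G k) (f i' k (hij'.trans hjk) x')) := by
            rw [hk]
        _ = ofL k (T i' k (hij'.trans hjk) ((1 : B) ⊗ₜ KaehlerDifferential.D A (G i') x')) := by
            rw [hT_tmul]
        _ = ofL i' ((1 : B) ⊗ₜ KaehlerDifferential.D A (G i') x') :=
            Module.DirectLimit.of_f (R := B) (hij := hij'.trans hjk)
    exact key' (idx (g i x)) (rep (g i x)) (hrep (g i x)).symm
  have hδ : ∀ (i : ι) (x : G i),
      δ (g i x) = ofL i ((1 : B) ⊗ₜ KaehlerDifferential.D A (G i) x) :=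
    fun i x => (key i x).symm
  have hgf : ∀ (a b' : ι) (h : a ≤ b') (y : G a), g b' (f a b' h y) = g a y := fun a b' h y => by
    rw [← hg a b' h]; rfl
  let D0 : Derivation A B L :=
  { toFun := δ
    map_add' := by
      intro b₁ b₂
      obtain ⟨j, h1, h2⟩ := exists_ge_ge (idx b₁) (idx b₂)
      have e1 : b₁ = g j (f (idx b₁) j h1 (rep b₁)) := by rw [hgf, hrep]
      have e2 : b₂ = g j (f (idx b₂) j h2 (rep b₂)) := by rw [hgf, hrep]
      rw [e1, e2, ← map_add (g j), hδ, hδ, hδ, map_add, tmul_add, map_add]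
    map_smul' := by
      intro a b
      simp only [RingHom.id_apply]
      conv_rhs => rw [← hrep b, hδ]
      have e : a • b = g (idx b) (a • rep b) := by rw [map_smul, hrep]
      rw [e, hδ, Derivation.map_smul, ← algebraMap_smul (G (idx b)) a
          (KaehlerDifferential.D A (G (idx b)) (rep b)),
        smul_one_tmul, (g (idx b)).commutes, map_smul, algebraMap_smul]
    map_one_eq_zero' := by
      have e : (1 : B) = g (Classical.arbitrary ι) 1 := (map_one _).symm
      show δ 1 = 0
      rw [e, hδ, Derivation.map_one_eq_zero, tmul_zero, map_zero]
    leibniz' := by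
      intro b₁ b₂
      show δ (b₁ * b₂) = b₁ • δ b₂ + b₂ • δ b₁
      obtain ⟨j, h1, h2⟩ := exists_ge_ge (idx b₁) (idx b₂)
      have e1 : b₁ = g j (f (idx b₁) j h1 (rep b₁)) := by rw [hgf, hrep]
      have e2 : b₂ = g j (f (idx b₂) j h2 (rep b₂)) := by rw [hgf, hrep]
      rw [e1, e2, ← map_mul (g j), hδ, hδ, hδ, Derivation.leibniz, tmul_add,
        smul_one_tmul, smul_one_tmul, map_add, map_smul, map_smul] }
  let ℓ : Ω[B⁄A] →ₗ[B] L := @Derivation.liftKaehlerDifferential A B _ _ _ L (Module.DirectLimit.addCommGroup _ _) _ _ _ D0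
  have hℓD : ∀ b : B, ℓ (KaehlerDifferential.D A B b) = δ b := fun b =>
    Derivation.congr_fun (@Derivation.liftKaehlerDifferential_comp A B _ _ _ L (Module.DirectLimit.addCommGroup _ _) _ _ _ D0) b
  have hmap : ∀ (i : ι) (w : Ω[G i⁄A]),
      ℓ (KaehlerDifferential.map A A (G i) B w) = ofL i ((1 : B) ⊗ₜ[G i] w) := by
    intro i w
    have hw : w ∈ Submodule.span (G i) (Set.range (KaehlerDifferential.D A (G i))) := by
      rw [KaehlerDifferential.span_range_derivation]; trivial
    induction hw using Submodule.span_induction with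
    | mem x hx =>
        obtain ⟨x, rfl⟩ := hx
        rw [KaehlerDifferential.map_D, hℓD]
        exact (key i x).symm
    | zero => simp
    | add x y _ _ hx hy => rw [map_add, map_add, hx, hy, tmul_add, map_add]
    | smul c w _ ih =>
        rw [map_smul, ← algebraMap_smul B c (KaehlerDifferential.map A A (G i) B w),
          map_smul, ih]
        have hc : (algebraMap (G i) B) c = g i c := rfl
        rw [hc, ← map_smul, ← smul_one_tmul]
  have retract : ∀ (i : ι) (z : B ⊗[G i] Ω[G i⁄A]),
      ℓ (KaehlerDifferential.mapBaseChange A (G i) B z) = ofL i z := by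
    intro i z
    induction z with
    | zero => simp
    | tmul c w =>
        rw [KaehlerDifferential.mapBaseChange_tmul, map_smul, hmap, ← map_smul,
          smul_tmul', smul_eq_mul, mul_one]
    | add z₁ z₂ h₁ h₂ => rw [map_add, map_add, h₁, h₂, map_add]
  have compat : ∀ (i j : ι) (hij : i ≤ j) (z : B ⊗[G i] Ω[G i⁄A]),
      KaehlerDifferential.mapBaseChange A (G j) B (T i j hij z)
        = KaehlerDifferential.mapBaseChange A (G i) B z := by
    intro i j hij z
    letI : Algebra (G i) (G j) := (f i j hij).toRingHom.toAlgebra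
    haveI : IsScalarTower A (G i) (G j) :=
      IsScalarTower.of_algebraMap_eq (fun x => ((f i j hij).commutes x).symm)
    haveI : IsScalarTower (G i) (G j) B :=
      IsScalarTower.of_algebraMap_eq (fun x =>
        show g i x = g j (f i j hij x) from (hgf i j hij x).symm)
    exact mapBaseChange_transferAux A B (G i) (G j) z
  let μ : L →ₗ[B] Ω[B⁄A] := Module.DirectLimit.lift B ι (fun i => B ⊗[G i] Ω[G i⁄A])
    (fun i j h => T i j h) (fun i => KaehlerDifferential.mapBaseChange A (G i) B)
    (fun i j hij z => compat i j hij z)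
  have hμ : ∀ (i : ι) (z : B ⊗[G i] Ω[G i⁄A]),
      μ (ofL i z) = KaehlerDifferential.mapBaseChange A (G i) B z := fun i z =>
    Module.DirectLimit.lift_of _ _ _
  have μℓ : ∀ w : Ω[B⁄A], μ (ℓ w) = w := by
    intro w
    have hw : w ∈ Submodule.span B (Set.range (KaehlerDifferential.D A B)) := by
      rw [KaehlerDifferential.span_range_derivation]; trivial
    induction hw using Submodule.span_induction with
    | mem x hx =>
        obtain ⟨b, rfl⟩ := hx
        rw [hℓD]
        show μ (ofL (idx b) _) = _
        rw [hμ, KaehlerDifferential.mapBaseChange_tmul, one_smul, KaehlerDifferential.map_D]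
        exact congrArg _ (hrep b)
    | zero => simp
    | add x y _ _ hx hy => rw [map_add, map_add, hx, hy]
    | smul c x _ ih => rw [map_smul, map_smul, ih]
  constructor
  · intro w
    obtain ⟨i, z, hz⟩ := Module.DirectLimit.exists_of (ℓ w)
    refine ⟨i, z, ?_⟩
    show KaehlerDifferential.mapBaseChange A (G i) B z = w
    rw [← hμ i z, hz, μℓ]
  · intro i m bv ωv h0
    replace h0 : KaehlerDifferential.mapBaseChange A (G i) B (∑ k, bv k ⊗ₜ[G i] ωv k) = 0 := h0
    have h1 : ofL i (∑ k, bv k ⊗ₜ[G i] ωv k) = 0 := by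
      rw [← retract i, h0, map_zero]
    obtain ⟨j, hij, hj⟩ := Module.DirectLimit.of.zero_exact h1
    refine ⟨j, hij, ?_⟩
    letI : Algebra (G i) (G j) := (f i j hij).toRingHom.toAlgebra
    haveI : IsScalarTower A (G i) (G j) :=
      IsScalarTower.of_algebraMap_eq (fun x => ((f i j hij).commutes x).symm)
    haveI : IsScalarTower (G i) (G j) B :=
      IsScalarTower.of_algebraMap_eq (fun x =>
        show g i x = g j (f i j hij x) from (hgf i j hij x).symm)
    show ∑ k, bv k ⊗ₜ[G j] (KaehlerDifferential.map A A (G i) (G j) (ωv k)) = 0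
    have hTsum : T i j hij (∑ k, bv k ⊗ₜ[G i] ωv k)
        = ∑ k, bv k ⊗ₜ[G j] (KaehlerDifferential.map A A (G i) (G j) (ωv k)) := by
      rw [map_sum]
      exact Finset.sum_congr rfl (fun k _ => transferAux_tmul A B (G i) (G j) (bv k) (ωv k))
    rw [← hTsum]
    exact hj
end

section
/- Let p be a prime and n a natural number. The module of Kähler differentials Ω_{ℤ_p[p^{1/p^n}]/ℤ_p} is isomorphic as a ℤ_p[p^{1/p^n}]-module to ℤ_p[p^{1/p^n}]/(p^n · p^{1-1/p^n}), generated by d(p^{1/p^n}). -/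
/-!
Write `R = k[X]/(f)` with root `α`. Since `α` generates `R`, the differential `dα` generates
`Ω[R⁄k]`, and `f'(α) dα = d(f(α)) = 0`. Conversely `P(α) ↦ P'(α) mod f'(α)` is a well-defined
derivation `R → R/(f'(α))` sending `α` to `1`, so the annihilator of `dα` is exactly `(f'(α))`
and `Ω[R⁄k] ≅ R/(f'(α))`. For `f = X^{pⁿ} - p` one has `f'(α) = pⁿ α^{pⁿ-1}`.
-/

open Polynomial KaehlerDifferential

namespace AdjoinRoot

variable {k : Type*} [CommRing k] (f : k[X])

local notation "Q" => AdjoinRoot f ⧸ Ideal.span {mk f (derivative f)}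

noncomputable def derivativeModDerivative : k[X] →ₗ[k] Q :=
  (Ideal.Quotient.mkₐ k _).toLinearMap ∘ₗ (mkₐ f).toLinearMap ∘ₗ derivative

theorem span_le_ker_derivativeModDerivative :
    (Ideal.span {f}).restrictScalars k ≤ LinearMap.ker (derivativeModDerivative f) := by
  intro P hP
  obtain ⟨g, rfl⟩ := Ideal.mem_span_singleton'.mp hP
  simp only [LinearMap.mem_ker, derivativeModDerivative, LinearMap.coe_comp, Function.comp_apply,
    AlgHom.toLinearMap_apply, coe_mkₐ, derivative_mul, map_add, map_mul, mk_self, mul_zero,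
    zero_add, Ideal.Quotient.mkₐ_eq_mk]
  exact Ideal.Quotient.eq_zero_iff_mem.mpr <|
    Ideal.mul_mem_left _ _ (Ideal.mem_span_singleton_self _)

noncomputable def derivationModDerivative : Derivation k (AdjoinRoot f) Q :=
  Derivation.mk'
    (Submodule.liftQ _ _ (span_le_ker_derivativeModDerivative f) ∘ₗ
      (Submodule.Quotient.restrictScalarsEquiv k (Ideal.span {f})).symm.toLinearMap)
    (by
      intro a b
      obtain ⟨P, rfl⟩ := mk_surjective a
      obtain ⟨R, rfl⟩ := mk_surjective b
      change Ideal.Quotient.mk _ (mk f (derivative (P * R))) =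
        mk f P • Ideal.Quotient.mk _ (mk f (derivative R)) +
          mk f R • Ideal.Quotient.mk _ (mk f (derivative P))
      simp only [derivative_mul, Algebra.smul_def, Ideal.Quotient.algebraMap_eq, map_add, map_mul]
      ring)

theorem derivationModDerivative_mk (P : k[X]) :
    derivationModDerivative f (mk f P) = Ideal.Quotient.mk _ (mk f (derivative P)) := by
  rfl

theorem derivationModDerivative_root : derivationModDerivative f (root f) = 1 := by
  rw [← mk_X, derivationModDerivative_mk, derivative_X, map_one, map_one]

theorem derivative_smul_D_root : mk f (derivative f) • D k (AdjoinRoot f) (root f) = 0 := by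
  rw [← aeval_eq, ← Derivation.map_aeval, aeval_eq, mk_self, map_zero]

theorem span_D_root : Submodule.span (AdjoinRoot f) {D k (AdjoinRoot f) (root f)} = ⊤ := by
  rw [eq_top_iff, ← span_range_derivation, Submodule.span_le]
  rintro _ ⟨x, rfl⟩
  obtain ⟨P, rfl⟩ := mk_surjective x
  rw [← aeval_eq, Derivation.map_aeval]
  exact Submodule.smul_mem _ _ (Submodule.mem_span_singleton_self _)

theorem torsionOf_D_root :
    Ideal.torsionOf (AdjoinRoot f) Ω[AdjoinRoot f⁄k] (D k _ (root f)) =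
      Ideal.span {mk f (derivative f)} := by
  ext r
  rw [Ideal.mem_torsionOf_iff]
  constructor
  · intro h
    have := congrArg (derivationModDerivative f).liftKaehlerDifferential h
    rwa [map_smul, Derivation.liftKaehlerDifferential_comp_D, derivationModDerivative_root,
      map_zero, ← Algebra.algebraMap_eq_smul_one, Ideal.Quotient.algebraMap_eq,
      Ideal.Quotient.eq_zero_iff_mem] at this
  · intro h
    obtain ⟨c, rfl⟩ := Ideal.mem_span_singleton'.mp h
    rw [mul_smul, derivative_smul_D_root, smul_zero]

noncomputable def quotDerivativeEquivKaehlerDifferential :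
    Q ≃ₗ[AdjoinRoot f] Ω[AdjoinRoot f⁄k] :=
  (Submodule.quotEquivOfEq _ _ (torsionOf_D_root f).symm).trans <|
    (Ideal.quotTorsionOfEquivSpanSingleton _ _ _).trans (LinearEquiv.ofTop _ (span_D_root f))

theorem quotDerivativeEquivKaehlerDifferential_one :
    quotDerivativeEquivKaehlerDifferential f 1 = D k _ (root f) := by
  change (Ideal.quotTorsionOfEquivSpanSingleton (AdjoinRoot f) _ (D k _ (root f))
    (Submodule.Quotient.mk 1) : Ω[AdjoinRoot f⁄k]) = _
  rw [Ideal.quotTorsionOfEquivSpanSingleton_apply_mk, one_smul]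

end AdjoinRoot

open Polynomial in
/-- Let `p` be a prime and `n : ℕ`.  Writing `ℤ_p[p^{1/pⁿ}] = ℤ_p[X]/(X^{pⁿ} - p)` (with
`p^{1/pⁿ}` the class of `X`), the module of Kähler differentials `Ω[ℤ_p[p^{1/pⁿ}]⁄ℤ_p]` is
isomorphic as a `ℤ_p[p^{1/pⁿ}]`-module to `ℤ_p[p^{1/pⁿ}]/(pⁿ · p^{1 - 1/pⁿ})`, generated by
`d(p^{1/pⁿ})` (the image of `1` under the isomorphism). -/
theorem stmt_1 (p : ℕ) [Fact p.Prime] (n : ℕ) :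
    letI R := AdjoinRoot ((X : Polynomial ℤ_[p]) ^ (p ^ n) - C (p : ℤ_[p]))
    letI α : R := AdjoinRoot.root _
    ∃ e : (R ⧸ Ideal.span {(p : R) ^ n * α ^ (p ^ n - 1)}) ≃ₗ[R] Ω[R⁄ℤ_[p]],
      e 1 = KaehlerDifferential.D ℤ_[p] R α := by
  set f : ℤ_[p][X] := X ^ (p ^ n) - C (p : ℤ_[p])
  have hf : AdjoinRoot.mk f (derivative f) =
      (p : AdjoinRoot f) ^ n * AdjoinRoot.root f ^ (p ^ n - 1) := by
    simp [f, derivative_X_pow]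
  rw [← hf]
  exact ⟨_, AdjoinRoot.quotDerivativeEquivKaehlerDifferential_one f⟩
end

section
/- Let V_∞ = colim_n ℤ_p[p^{1/p^n}] along the inclusions p^{1/p^n} = (p^{1/p^{n+1}})^p. Then the map ν: (ℚ_p/ℤ_p) ⊗_{ℤ_p} V_∞ → Ω_{V_∞/ℤ_p} sending (1/p^n) ⊗ 1 to p^{1-1/p^n} d(p^{1/p^n}) is an isomorphism of V_∞-modules. -/
open Polynomial TensorProduct

set_option maxHeartbeats 1000000

lemma tmul_one_inj (p : ℕ) [Fact p.Prime] (V : Type*) [CommRing V] [IsDomain V]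
    [Algebra ℤ_[p] V] (hinj : Function.Injective (algebraMap ℤ_[p] V)) :
    Function.Injective (fun v : V => (v ⊗ₜ[ℤ_[p]] (1 : ℚ_[p]) : V ⊗[ℤ_[p]] ℚ_[p])) := by
  have hbc : IsLocalizedModule (nonZeroDivisors ℤ_[p]) (TensorProduct.mk ℤ_[p] ℚ_[p] V 1) :=
    (isLocalizedModule_iff_isBaseChange (nonZeroDivisors ℤ_[p]) ℚ_[p] _).mpr
      (TensorProduct.isBaseChange ℤ_[p] V ℚ_[p])
  have hf : Function.Injective (TensorProduct.mk ℤ_[p] ℚ_[p] V 1) := by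
    intro a b hab
    have h0 : TensorProduct.mk ℤ_[p] ℚ_[p] V 1 (a - b) = 0 := by
      rw [map_sub, hab, sub_self]
    obtain ⟨s, hs⟩ := (IsLocalizedModule.eq_zero_iff (nonZeroDivisors ℤ_[p]) _).mp h0
    have hs' : algebraMap ℤ_[p] V s.1 * (a - b) = 0 := by
      rw [← Algebra.smul_def]; exact hs
    have hsne : algebraMap ℤ_[p] V s.1 ≠ 0 := by
      intro hcon
      have : (s : ℤ_[p]) = 0 := hinj (show algebraMap ℤ_[p] V s.1 = algebraMap ℤ_[p] V 0 by
        rw [map_zero]; exact hcon)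
      exact nonZeroDivisors.coe_ne_zero s this
    have := mul_eq_zero.mp hs'
    rcases this with h | h
    · exact absurd h hsne
    · exact sub_eq_zero.mp h
  have : (fun v : V => (v ⊗ₜ[ℤ_[p]] (1 : ℚ_[p]) : V ⊗[ℤ_[p]] ℚ_[p]))
      = (TensorProduct.comm ℤ_[p] ℚ_[p] V) ∘ (TensorProduct.mk ℤ_[p] ℚ_[p] V 1) := by
    funext v; simp [TensorProduct.comm_tmul]
  rw [this]
  exact (TensorProduct.comm ℤ_[p] ℚ_[p] V).injective.comp hf

lemma tensor_quot_zero (p : ℕ) [Fact p.Prime] (V : Type*) [CommRing V] [IsDomain V]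
    [Algebra ℤ_[p] V] (w : V) (x : ℚ_[p])
    (h : (w ⊗ₜ[ℤ_[p]] (Submodule.Quotient.mk x :
        ℚ_[p] ⧸ LinearMap.range (Algebra.linearMap ℤ_[p] ℚ_[p]))) = 0) :
    ∃ c : V, w ⊗ₜ[ℤ_[p]] x = c ⊗ₜ[ℤ_[p]] (1 : ℚ_[p]) := by
  set J := LinearMap.range (Algebra.linearMap ℤ_[p] ℚ_[p]) with hJ
  have hker : (w ⊗ₜ[ℤ_[p]] x) ∈ LinearMap.ker (LinearMap.lTensor V J.mkQ) := by
    simp only [LinearMap.mem_ker, LinearMap.lTensor_tmul]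
    exact h
  rw [lTensor_mkQ V J] at hker
  obtain ⟨η, hη⟩ := hker
  suffices hsuff : ∀ η : V ⊗[ℤ_[p]] J, ∃ c : V,
      LinearMap.lTensor V J.subtype η = c ⊗ₜ[ℤ_[p]] (1 : ℚ_[p]) by
    obtain ⟨c, hc⟩ := hsuff η
    exact ⟨c, by rw [← hη, hc]⟩
  intro η
  induction η using TensorProduct.induction_on with
  | zero => exact ⟨0, by simp⟩
  | tmul v j =>
      obtain ⟨a, ha⟩ := j.2
      refine ⟨a • v, ?_⟩
      have : (j : ℚ_[p]) = a • (1 : ℚ_[p]) := by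
        rw [← ha]; simp [Algebra.smul_def]
      simp only [LinearMap.lTensor_tmul, Submodule.coe_subtype, this]
      rw [TensorProduct.tmul_smul, TensorProduct.smul_tmul']
  | add η₁ η₂ ih₁ ih₂ =>
      obtain ⟨c₁, hc₁⟩ := ih₁
      obtain ⟨c₂, hc₂⟩ := ih₂
      exact ⟨c₁ + c₂, by rw [map_add, hc₁, hc₂, TensorProduct.add_tmul]⟩


open TensorProduct in
/-- Let `V∞ = colim_n ℤ_p[p^{1/pⁿ}]` along the inclusions `p^{1/pⁿ} = (p^{1/p^{n+1}})^p`.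
(Here `V` is any realization of this colimit: a domain which is a `ℤ_p`-algebra, equipped with
a compatible system `π n` of `pⁿ`-th roots of `p`, which is the union of the subalgebras
`ℤ_p[π n]`, each free of rank `pⁿ` over `ℤ_p`.)  Then the map
`ν : (ℚ_p/ℤ_p) ⊗_{ℤ_p} V∞ → Ω[V∞⁄ℤ_p]` sending `(1/pⁿ) ⊗ 1` to `p^{1-1/pⁿ} d(p^{1/pⁿ})`
is an isomorphism of `V∞`-modules. -/
theorem stmt_2 (p : ℕ) [Fact p.Prime] (V : Type*) [CommRing V] [IsDomain V] [Algebra ℤ_[p] V]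
    (π : ℕ → V) (hπ0 : π 0 = (p : V)) (hπ : ∀ n, π (n + 1) ^ p = π n)
    (hunion : ⨆ n, Algebra.adjoin ℤ_[p] {π n} = ⊤)
    (hli : ∀ n, LinearIndependent ℤ_[p] fun i : Fin (p ^ n) => π n ^ (i : ℕ)) :
    ∃ e : (V ⊗[ℤ_[p]]
        (ℚ_[p] ⧸ LinearMap.range (Algebra.linearMap ℤ_[p] ℚ_[p]))) ≃ₗ[V] Ω[V⁄ℤ_[p]],
      ∀ n : ℕ,
        e ((1 : V) ⊗ₜ Submodule.Quotient.mk (((p : ℚ_[p]) ^ n)⁻¹)) =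
          π n ^ (p ^ n - 1) • KaehlerDifferential.D ℤ_[p] V (π n) := by
  have hp : p.Prime := Fact.out
  have hp1 : 1 < p := hp.one_lt
  have hp0 : p ≠ 0 := hp.ne_zero
  -- compatible powers
  have hπpow : ∀ n k, π (n + k) ^ p ^ k = π n := by
    intro n k
    induction k with
    | zero => simp
    | succ k ih =>
        rw [pow_succ', pow_mul]
        show (π (n + k + 1) ^ p) ^ p ^ k = π n
        rw [hπ (n + k), ih]
  have hπtop : ∀ n, π n ^ p ^ n = (p : V) := by
    intro n
    have := hπpow 0 n
    rw [Nat.zero_add] at this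
    rw [this, hπ0]
  -- injectivity of the structure map
  have hinj : Function.Injective (algebraMap ℤ_[p] V) := by
    rw [injective_iff_map_eq_zero]
    intro a ha
    have h1 := Fintype.linearIndependent_iff.mp (hli 0) (fun _ => a) ?_ ⟨0, by simp⟩
    · exact h1
    · have hterm : ∀ i : Fin (p ^ 0), (fun _ : Fin (p ^ 0) => a) i • π 0 ^ (i : ℕ) = 0 := by
        intro i
        have hi : (i : ℕ) = 0 := Nat.lt_one_iff.mp (by simpa using i.2)
        rw [hi]
        simp [Algebra.smul_def, ha]
      rw [Finset.sum_congr rfl fun i _ => hterm i, Finset.sum_const, smul_zero]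
  have hpZ : ((p : ℤ_[p])) ≠ 0 := by exact_mod_cast Nat.cast_ne_zero.mpr hp0
  have hpV : (p : V) ≠ 0 := by
    intro hc
    apply hpZ
    apply hinj
    rw [map_natCast, map_zero]
    exact_mod_cast hc
  have hπne : ∀ n, π n ≠ 0 := by
    intro n hc
    apply hpV
    rw [← hπtop n, hc, zero_pow (pow_ne_zero n hp0)]
  -- kernel of aeval (π n)
  have hker : ∀ (n : ℕ) (q : ℤ_[p][X]), aeval (π n) q = 0 →
      ∃ h : ℤ_[p][X], q = (X ^ p ^ n - C ((p : ℤ_[p]))) * h := by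
    intro n q hq
    set f : ℤ_[p][X] := X ^ p ^ n - C ((p : ℤ_[p])) with hf
    have hmonic : f.Monic := monic_X_pow_sub_C _ (pow_ne_zero n hp0)
    have hfeval : aeval (π n) f = 0 := by
      simp [hf, hπtop n, map_natCast]
    have hdiv := modByMonic_add_div q f
    have hreval : aeval (π n) (q %ₘ f) = 0 := by
      have : aeval (π n) (q %ₘ f + f * (q /ₘ f)) = 0 := by rw [hdiv]; exact hq
      rwa [map_add, map_mul, hfeval, zero_mul, add_zero] at this
    have hr0 : q %ₘ f = 0 := by
      by_contra hrne
      have hrdeg : (q %ₘ f).natDegree < p ^ n := by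
        have h1 : (q %ₘ f).degree < f.degree := degree_modByMonic_lt q hmonic
        have h2 : f.degree = (p ^ n : ℕ) := by
          rw [hf]; exact degree_X_pow_sub_C (pow_pos hp.pos n) _
        rw [h2] at h1
        exact (natDegree_lt_iff_degree_lt hrne).mpr h1
      have hsum : ∑ i : Fin (p ^ n), (q %ₘ f).coeff (i : ℕ) • π n ^ (i : ℕ) = 0 := by
        rw [← Finset.sum_range (fun i => (q %ₘ f).coeff i • π n ^ i),
          ← aeval_eq_sum_range' hrdeg, hreval]
      have hco := Fintype.linearIndependent_iff.mp (hli n)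
        (fun i : Fin (p ^ n) => (q %ₘ f).coeff (i : ℕ)) hsum
      apply hrne
      apply leadingCoeff_eq_zero.mp
      exact hco ⟨(q %ₘ f).natDegree, hrdeg⟩
    refine ⟨q /ₘ f, ?_⟩
    nth_rewrite 1 [← hdiv]
    rw [hr0, zero_add]
  -- the Prüfer module side
  have hpQ : (p : ℚ_[p]) ≠ 0 := by exact_mod_cast Nat.cast_ne_zero.mpr hp0
  let Q := ℚ_[p] ⧸ LinearMap.range (Algebra.linearMap ℤ_[p] ℚ_[p])
  let u : ℕ → Q := fun n => Submodule.Quotient.mk (((p : ℚ_[p]) ^ n)⁻¹)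
  have halgp : ∀ k : ℕ, (algebraMap ℤ_[p] ℚ_[p]) ((p : ℤ_[p]) ^ k) = (p : ℚ_[p]) ^ k := by
    intro k; rw [map_pow, map_natCast]
  have hup : ∀ n, (p : ℤ_[p]) • u (n + 1) = u n := by
    intro n
    show (p : ℤ_[p]) • Submodule.Quotient.mk _ = Submodule.Quotient.mk _
    rw [← Submodule.Quotient.mk_smul]
    congr 1
    rw [Algebra.smul_def, map_natCast]
    field_simp
    rw [pow_succ]
    ring
  have hu0 : u 0 = 0 := by
    show Submodule.Quotient.mk _ = 0
    rw [Submodule.Quotient.mk_eq_zero]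
    exact ⟨1, by simp⟩
  have hupk : ∀ n k, (p : ℤ_[p]) ^ k • u (n + k) = u n := by
    intro n k
    induction k with
    | zero => simp
    | succ k ih =>
        rw [pow_succ, mul_smul]
        show (p : ℤ_[p]) ^ k • ((p : ℤ_[p]) • u ((n + k) + 1)) = u n
        rw [hup (n + k), ih]
  have hpnu : ∀ n, (p : ℤ_[p]) ^ n • u n = 0 := by
    intro n
    have := hupk 0 n
    rw [Nat.zero_add] at this
    rw [this, hu0]
  -- the element t n = "ν(1/p^(n+1)) scaled"
  let t : ℕ → V ⊗[ℤ_[p]] Q := fun n => π (n + 1) ^ p • ((1 : V) ⊗ₜ[ℤ_[p]] u (n + 1))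
  have hcastk : ∀ (k : ℕ) (m : V ⊗[ℤ_[p]] Q), (p : V) ^ k • m = (p : ℤ_[p]) ^ k • m := by
    intro k m
    rw [← Nat.cast_pow, ← Nat.cast_pow, Nat.cast_smul_eq_nsmul, Nat.cast_smul_eq_nsmul]
  have hcast1 : ∀ m : V ⊗[ℤ_[p]] Q, (p : V) • m = (p : ℤ_[p]) • m := by
    intro m
    rw [Nat.cast_smul_eq_nsmul, Nat.cast_smul_eq_nsmul]
  have key1 : ∀ n, π n ^ (p ^ n - 1) • t n = (1 : V) ⊗ₜ[ℤ_[p]] u n := by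
    intro n
    show π n ^ (p ^ n - 1) • π (n + 1) ^ p • ((1 : V) ⊗ₜ[ℤ_[p]] u (n + 1)) = _
    rw [smul_smul]
    have hmul : π n ^ (p ^ n - 1) * π (n + 1) ^ p = (p : V) := by
      rw [← hπ n, ← pow_mul, ← pow_add]
      have harith : p * (p ^ n - 1) + p = p ^ (n + 1) := by
        have h1 : 1 ≤ p ^ n := Nat.one_le_pow _ _ hp.pos
        have h2 : p ≤ p * p ^ n := Nat.le_mul_of_pos_right p (Nat.pos_of_ne_zero (pow_ne_zero n hp0))
        rw [Nat.mul_sub, Nat.mul_one, Nat.sub_add_cancel h2, pow_succ']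
      rw [harith, hπtop (n + 1)]
    rw [hmul, hcast1, ← TensorProduct.tmul_smul, hup n]
  have key2 : ∀ n, ((p : V) * π (n + 1) ^ (p - 1)) • t (n + 1) = t n := by
    intro n
    show ((p : V) * π (n + 1) ^ (p - 1)) • π (n + 2) ^ p • ((1 : V) ⊗ₜ[ℤ_[p]] u (n + 2)) =
      π (n + 1) ^ p • ((1 : V) ⊗ₜ[ℤ_[p]] u (n + 1))
    rw [smul_smul]
    have hmul : (p : V) * π (n + 1) ^ (p - 1) * π (n + 2) ^ p = (p : V) * π (n + 1) ^ p := by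
      rw [hπ (n + 1)]
      have : π (n + 1) ^ (p - 1) * π (n + 1) = π (n + 1) ^ p := by
        rw [← pow_succ, Nat.sub_add_cancel hp.one_le]
      rw [mul_assoc, this]
    rw [hmul, mul_comm, mul_smul, hcast1, ← TensorProduct.tmul_smul]
    show π (n + 1) ^ p • ((1 : V) ⊗ₜ[ℤ_[p]] ((p : ℤ_[p]) • u ((n + 1) + 1))) = _
    rw [hup (n + 1)]
  -- annihilation property
  have hann : ∀ (n : ℕ) (q : ℤ_[p][X]), aeval (π n) q = 0 →
      aeval (π n) (derivative q) • t n = 0 := by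
    intro n q hq
    obtain ⟨h, rfl⟩ := hker n q hq
    have hd : derivative ((X ^ p ^ n - C ((p : ℤ_[p]))) * h) =
        (C ((p ^ n : ℤ_[p])) * X ^ (p ^ n - 1)) * h + (X ^ p ^ n - C ((p : ℤ_[p]))) * derivative h := by
      rw [derivative_mul, derivative_sub, derivative_X_pow, derivative_C, sub_zero]
      norm_cast
    rw [hd, map_add]
    simp only [map_mul, map_sub, map_pow, aeval_X, aeval_C, map_natCast]
    rw [hπtop n, sub_self, zero_mul, add_zero]
    have hz2 : (p : V) ^ n • (π n ^ (p ^ n - 1) • t n) = 0 := by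
      rw [key1 n, hcastk n, ← TensorProduct.tmul_smul, hpnu n, TensorProduct.tmul_zero]
    have hre : (p : V) ^ n * π n ^ (p ^ n - 1) * (aeval (π n) h) =
        (aeval (π n) h) * ((p : V) ^ n * π n ^ (p ^ n - 1)) := by ring
    rw [hre, mul_smul, mul_smul, hz2, smul_zero]
  -- representations of elements as polynomials in π n
  have hmono : Monotone (fun n => Algebra.adjoin ℤ_[p] {π n}) := by
    apply monotone_nat_of_le_succ
    intro n
    rw [Algebra.adjoin_le_iff, Set.singleton_subset_iff]
    rw [← hπ n]
    exact pow_mem (Algebra.self_mem_adjoin_singleton ℤ_[p] _) p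
  have hdir : Directed (· ≤ ·) (fun n => Algebra.adjoin ℤ_[p] {π n}) := hmono.directed_le
  have hrep : ∀ v : V, ∃ (n : ℕ) (q : ℤ_[p][X]), aeval (π n) q = v := by
    intro v
    have hv : v ∈ (⊤ : Subalgebra ℤ_[p] V) := trivial
    rw [← hunion] at hv
    have hv2 : (v : V) ∈ ⋃ n, ((Algebra.adjoin ℤ_[p] {π n} : Subalgebra ℤ_[p] V) : Set V) := by
      rw [← Subalgebra.coe_iSup_of_directed hdir]
      exact hv
    obtain ⟨s, ⟨n, rfl⟩, hn⟩ := hv2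
    rw [SetLike.mem_coe, Algebra.adjoin_singleton_eq_range_aeval] at hn
    obtain ⟨q, hq⟩ := hn
    exact ⟨n, q, hq⟩
  have hlift : ∀ (n k : ℕ) (q : ℤ_[p][X]),
      aeval (π (n + k)) (expand ℤ_[p] (p ^ k) q) = aeval (π n) q := by
    intro n k q
    rw [expand_aeval, hπpow n k]
  have hrep2 : ∀ v w : V, ∃ (N : ℕ) (qv qw : ℤ_[p][X]),
      aeval (π N) qv = v ∧ aeval (π N) qw = w := by
    intro v w
    obtain ⟨n, q, hq⟩ := hrep v
    obtain ⟨m, r, hr⟩ := hrep w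
    refine ⟨max n m, expand ℤ_[p] (p ^ (max n m - n)) q, expand ℤ_[p] (p ^ (max n m - m)) r,
      ?_, ?_⟩
    · have := hlift n (max n m - n) q
      rw [Nat.add_sub_cancel' (le_max_left n m)] at this
      rw [this, hq]
    · have := hlift m (max n m - m) r
      rw [Nat.add_sub_cancel' (le_max_right n m)] at this
      rw [this, hr]
  -- well-definedness of the candidate derivation
  have hstep : ∀ (n : ℕ) (q : ℤ_[p][X]),
      aeval (π (n + 1)) (derivative (expand ℤ_[p] p q)) • t (n + 1) =
      aeval (π n) (derivative q) • t n := by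
    intro n q
    rw [derivative_expand, map_mul, expand_aeval, hπ n]
    have : aeval (π (n + 1)) ((p : ℤ_[p][X]) * X ^ (p - 1)) = (p : V) * π (n + 1) ^ (p - 1) := by
      rw [map_mul, map_natCast, map_pow, aeval_X]
    rw [this, mul_smul, key2 n]
  have hstepk : ∀ (n k : ℕ) (q : ℤ_[p][X]),
      aeval (π (n + k)) (derivative (expand ℤ_[p] (p ^ k) q)) • t (n + k) =
      aeval (π n) (derivative q) • t n := by
    intro n k
    induction k generalizing n with
    | zero => intro q; simp
    | succ k ih =>
        intro q
        have hexp : expand ℤ_[p] (p ^ (k + 1)) q = expand ℤ_[p] (p ^ k) (expand ℤ_[p] p q) := by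
          rw [expand_expand, ← pow_succ]
        rw [hexp]
        have h1 := ih (n + 1) (expand ℤ_[p] p q)
        have h2 : n + 1 + k = n + (k + 1) := by omega
        rw [h2] at h1
        rw [h1, hstep n q]
  have hsame : ∀ (n : ℕ) (q r : ℤ_[p][X]), aeval (π n) q = aeval (π n) r →
      aeval (π n) (derivative q) • t n = aeval (π n) (derivative r) • t n := by
    intro n q r hqr
    have h0 : aeval (π n) (q - r) = 0 := by rw [map_sub, hqr, sub_self]
    have := hann n (q - r) h0
    rw [derivative_sub, map_sub] at this
    exact sub_eq_zero.mp ((sub_smul (aeval (π n) (derivative q)) (aeval (π n) (derivative r)) (t n)).symm.trans this)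
  have hwd : ∀ (n m : ℕ) (q r : ℤ_[p][X]), aeval (π n) q = aeval (π m) r →
      aeval (π n) (derivative q) • t n = aeval (π m) (derivative r) • t m := by
    have main : ∀ (n m : ℕ) (q r : ℤ_[p][X]), n ≤ m → aeval (π n) q = aeval (π m) r →
        aeval (π n) (derivative q) • t n = aeval (π m) (derivative r) • t m := by
      intro n m q r hle h
      obtain ⟨k, rfl⟩ := Nat.exists_eq_add_of_le hle
      rw [← hstepk n k q]
      exact hsame (n + k) _ r (by rw [hlift n k q]; exact h)
    intro n m q r h
    rcases le_total n m with hle | hle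
    · exact main n m q r hle h
    · exact (main m n r q hle h.symm).symm
  -- the derivation
  choose nn qq hqq using hrep
  let F : V → V ⊗[ℤ_[p]] Q := fun v => aeval (π (nn v)) (derivative (qq v)) • t (nn v)
  have hF : ∀ (n : ℕ) (q : ℤ_[p][X]) (v : V), aeval (π n) q = v →
      F v = aeval (π n) (derivative q) • t n := by
    intro n q v h
    exact hwd (nn v) n (qq v) q (by rw [hqq v, ← h])
  have Fadd : ∀ v w, F (v + w) = F v + F w := by
    intro v w
    obtain ⟨N, qv, qw, hv, hw⟩ := hrep2 v w
    rw [hF N qv v hv, hF N qw w hw, hF N (qv + qw) (v + w) (by rw [map_add, hv, hw]),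
      derivative_add, map_add, add_smul]
  have Fsmul : ∀ (c : ℤ_[p]) (v : V), F (c • v) = c • F v := by
    intro c v
    rw [hF (nn v) (qq v) v (hqq v),
      hF (nn v) (C c * qq v) (c • v)
        (by rw [map_mul, aeval_C, hqq v, Algebra.smul_def]),
      derivative_C_mul, map_mul, aeval_C, mul_smul, algebraMap_smul]
  have Fone : F 1 = 0 := by
    rw [hF 0 1 1 (map_one _), derivative_one, map_zero, zero_smul]
  have Fmul : ∀ v w, F (v * w) = v • F w + w • F v := by
    intro v w
    obtain ⟨N, qv, qw, hv, hw⟩ := hrep2 v w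
    rw [hF N qv v hv, hF N qw w hw, hF N (qv * qw) (v * w) (by rw [map_mul, hv, hw]),
      derivative_mul, map_add, add_smul, map_mul, map_mul, hv, hw,
      mul_comm (aeval (π N) (derivative qv)) w, mul_smul, mul_smul]
    exact add_comm _ _
  let D0 : Derivation ℤ_[p] V (V ⊗[ℤ_[p]] Q) :=
    { toLinearMap := { toFun := F, map_add' := Fadd, map_smul' := Fsmul }
      map_one_eq_zero' := Fone
      leibniz' := Fmul }
  have hD0 : ∀ (n : ℕ) (q : ℤ_[p][X]) (v : V), aeval (π n) q = v →
      D0 v = aeval (π n) (derivative q) • t n := hF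
  have hD0π : ∀ n, D0 (π n) = t n := by
    intro n
    rw [hD0 n X (π n) (aeval_X _), derivative_X, map_one, one_smul]
  -- the lift to Kaehler differentials
  let L : Ω[V⁄ℤ_[p]] →ₗ[V] V ⊗[ℤ_[p]] Q := D0.liftKaehlerDifferential
  have hL : ∀ v, L (KaehlerDifferential.D ℤ_[p] V v) = D0 v :=
    fun v => D0.liftKaehlerDifferential_comp_D v
  -- surjectivity
  have hraise : ∀ (w : V) (m k : ℕ),
      ((p : ℤ_[p]) ^ k • w) ⊗ₜ[ℤ_[p]] u (m + k) = w ⊗ₜ[ℤ_[p]] u m := by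
    intro w m k
    rw [TensorProduct.smul_tmul, hupk m k]
  have hMrep : ∀ ξ : V ⊗[ℤ_[p]] Q, ∃ (m : ℕ) (w : V), ξ = w ⊗ₜ[ℤ_[p]] u m := by
    intro ξ
    induction ξ using TensorProduct.induction_on with
    | zero => exact ⟨0, 0, by simp⟩
    | tmul v q =>
        obtain ⟨x, rfl⟩ := Submodule.Quotient.mk_surjective _ q
        obtain ⟨m, hm⟩ : ∃ m : ℕ, ‖x‖ ≤ (p : ℝ) ^ m := by
          obtain ⟨m, hm⟩ := pow_unbounded_of_one_lt ‖x‖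
            (show (1 : ℝ) < (p : ℝ) by exact_mod_cast hp1)
          exact ⟨m, le_of_lt hm⟩
        have hppos : (0 : ℝ) < (p : ℝ) ^ m := by positivity
        have hnorm : ‖x * (p : ℚ_[p]) ^ m‖ ≤ 1 := by
          rw [norm_mul, norm_pow, Padic.norm_p, inv_pow]
          calc ‖x‖ * ((p : ℝ) ^ m)⁻¹ ≤ (p : ℝ) ^ m * ((p : ℝ) ^ m)⁻¹ :=
                mul_le_mul_of_nonneg_right hm (by positivity)
            _ = 1 := mul_inv_cancel₀ (ne_of_gt hppos)
        obtain ⟨a, ha⟩ : ∃ a : ℤ_[p], algebraMap ℤ_[p] ℚ_[p] a = x * (p : ℚ_[p]) ^ m :=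
          ⟨⟨x * (p : ℚ_[p]) ^ m, hnorm⟩, PadicInt.algebraMap_apply _⟩
        have hx : (Submodule.Quotient.mk x : Q) = a • u m := by
          show Submodule.Quotient.mk x =
            a • Submodule.Quotient.mk (((p : ℚ_[p]) ^ m)⁻¹)
          rw [← Submodule.Quotient.mk_smul]
          congr 1
          rw [Algebra.smul_def, ha]
          field_simp
        exact ⟨m, a • v, by rw [hx, TensorProduct.tmul_smul, TensorProduct.smul_tmul']⟩
    | add ξ₁ ξ₂ ih₁ ih₂ =>
        obtain ⟨m₁, w₁, rfl⟩ := ih₁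
        obtain ⟨m₂, w₂, rfl⟩ := ih₂
        refine ⟨max m₁ m₂, (p : ℤ_[p]) ^ (max m₁ m₂ - m₁) • w₁ +
          (p : ℤ_[p]) ^ (max m₁ m₂ - m₂) • w₂, ?_⟩
        rw [TensorProduct.add_tmul]
        congr 1
        · have := hraise w₁ m₁ (max m₁ m₂ - m₁)
          rw [Nat.add_sub_cancel' (le_max_left m₁ m₂)] at this
          rw [this]
        · have := hraise w₂ m₂ (max m₁ m₂ - m₂)
          rw [Nat.add_sub_cancel' (le_max_right m₁ m₂)] at this
          rw [this]
  have hsurj : Function.Surjective L := by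
    intro ξ
    obtain ⟨m, w, rfl⟩ := hMrep ξ
    refine ⟨w • π m ^ (p ^ m - 1) • KaehlerDifferential.D ℤ_[p] V (π m), ?_⟩
    rw [map_smul, map_smul, hL, hD0π m, key1 m, TensorProduct.smul_tmul', smul_eq_mul, mul_one]
  -- relations among the D (π n)
  have hDrel : ∀ n, KaehlerDifferential.D ℤ_[p] V (π n) =
      ((p : V) * π (n + 1) ^ (p - 1)) • KaehlerDifferential.D ℤ_[p] V (π (n + 1)) := by
    intro n
    rw [← hπ n, Derivation.leibniz_pow, ← Nat.cast_smul_eq_nsmul V, smul_smul]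
  have hDann : ∀ n, ((p : V) ^ n * π n ^ (p ^ n - 1)) • KaehlerDifferential.D ℤ_[p] V (π n)
      = 0 := by
    intro n
    have h0 : KaehlerDifferential.D ℤ_[p] V (π n ^ p ^ n) = 0 := by
      rw [hπtop n, show ((p : ℕ) : V) = algebraMap ℤ_[p] V ((p : ℕ) : ℤ_[p]) by rw [map_natCast]]
      exact Derivation.map_algebraMap _ _
    rw [Derivation.leibniz_pow, ← Nat.cast_smul_eq_nsmul V, smul_smul, Nat.cast_pow] at h0
    exact h0
  -- every differential form is v • D (π n)
  have hΩrep : ∀ ω : Ω[V⁄ℤ_[p]], ∃ (n : ℕ) (v : V),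
      ω = v • KaehlerDifferential.D ℤ_[p] V (π n) := by
    intro ω
    have hNmono : Monotone (fun n =>
        Submodule.span V {KaehlerDifferential.D ℤ_[p] V (π n)}) := by
      apply monotone_nat_of_le_succ
      intro n
      rw [Submodule.span_le, Set.singleton_subset_iff, SetLike.mem_coe, hDrel n]
      exact Submodule.smul_mem _ _ (Submodule.mem_span_singleton_self _)
    have htop : (⨆ n, Submodule.span V {KaehlerDifferential.D ℤ_[p] V (π n)}) = ⊤ := by
      rw [← top_le_iff, ← KaehlerDifferential.span_range_derivation ℤ_[p] V, Submodule.span_le]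
      rintro ω' ⟨v, rfl⟩
      have hDv : KaehlerDifferential.D ℤ_[p] V v
          = aeval (π (nn v)) (derivative (qq v)) •
            KaehlerDifferential.D ℤ_[p] V (π (nn v)) := by
        conv_lhs => rw [← hqq v]
        exact Derivation.map_aeval _ _ _
      rw [SetLike.mem_coe, hDv]
      exact Submodule.mem_iSup_of_mem (nn v)
        (Submodule.smul_mem _ _ (Submodule.mem_span_singleton_self _))
    have hmem : ω ∈ ⨆ n, Submodule.span V {KaehlerDifferential.D ℤ_[p] V (π n)} := by
      rw [htop]; trivial
    obtain ⟨n, hn⟩ := (Submodule.mem_iSup_of_directed _ hNmono.directed_le).mp hmem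
    obtain ⟨v, hv⟩ := Submodule.mem_span_singleton.mp hn
    exact ⟨n, v, hv.symm⟩
  -- injectivity
  have hinjL : Function.Injective L := by
    intro ω₁ ω₂ h12
    have h0 : L (ω₁ - ω₂) = 0 := by rw [map_sub, h12, sub_self]
    rw [← sub_eq_zero]
    set ω := ω₁ - ω₂ with hωdef
    clear_value ω
    obtain ⟨n, v, rfl⟩ := hΩrep ω
    rw [map_smul, hL, hD0π n] at h0
    have hω' : (v * π (n + 1) ^ p) ⊗ₜ[ℤ_[p]] u (n + 1) = 0 := by
      rw [← h0]
      show (v * π (n + 1) ^ p) ⊗ₜ[ℤ_[p]] u (n + 1)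
        = v • (π (n + 1) ^ p • ((1 : V) ⊗ₜ[ℤ_[p]] u (n + 1)))
      rw [smul_smul, TensorProduct.smul_tmul', smul_eq_mul, mul_one]
    obtain ⟨c, hc⟩ := tensor_quot_zero p V (v * π (n + 1) ^ p)
      (((p : ℚ_[p]) ^ (n + 1))⁻¹) hω'
    have hsc := congrArg (fun z => ((p : ℤ_[p]) ^ (n + 1)) • z) hc
    rw [← TensorProduct.tmul_smul, TensorProduct.smul_tmul'] at hsc
    have hone : ((p : ℤ_[p]) ^ (n + 1)) • ((p : ℚ_[p]) ^ (n + 1))⁻¹ = 1 := by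
      rw [Algebra.smul_def, halgp]
      field_simp
    rw [hone] at hsc
    have hw : v * π (n + 1) ^ p = (p : ℤ_[p]) ^ (n + 1) • c := tmul_one_inj p V hinj hsc
    have hwV : v * π (n + 1) ^ p = (p : V) ^ (n + 1) * c := by
      rw [hw, Algebra.smul_def, map_pow, map_natCast]
    -- now show v • D (π n) = 0
    have hkey : v * ((p : V) * π (n + 1) ^ (p - 1))
        = c * ((p : V) ^ (n + 1) * π (n + 1) ^ (p ^ (n + 1) - 1)) := by
      have h1 : 1 ≤ p ^ (n + 1) := Nat.one_le_pow _ _ hp.pos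
      have hexp : p + (p ^ (n + 1) - 1) = (p - 1) + p ^ (n + 1) := by
        set A := p ^ (n + 1); omega
      have : c * ((p : V) ^ (n + 1) * π (n + 1) ^ (p ^ (n + 1) - 1))
          = (v * π (n + 1) ^ p) * π (n + 1) ^ (p ^ (n + 1) - 1) := by
        rw [hwV]; ring
      rw [this, mul_assoc, ← pow_add, hexp, pow_add, ← mul_assoc]
      rw [hπtop (n + 1)]
      ring
    rw [hDrel n, smul_smul, hkey, ← smul_smul, hDann (n + 1), smul_zero]
  -- conclude
  refine ⟨(LinearEquiv.ofBijective L ⟨hinjL, hsurj⟩).symm, ?_⟩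
  intro n
  rw [LinearEquiv.symm_apply_eq]
  erw [LinearEquiv.ofBijective_apply]
  rw [map_smul, hL, hD0π n, key1 n]
end

section
/- Let k be a field of characteristic p with [k:k^p] = p^r, and let l/k be a finite field extension. Then [l:l^p] = p^r and the module of Kähler differentials Ω_{l/k} can be generated by at most r elements as an l-vector space. -/
/-!
Frobenius maps `l` isomorphically onto `lᵖ` and carries the image of `k` onto that of `kᵖ`, so
computing `[l : kᵖ]` through `k` and through `lᵖ` gives `[l : k] [k : kᵖ] = [l : k] [l : lᵖ]`.

Over `E = k lᵖ` every element of `l` has its `p`-th power in `E`, so each element adjoined from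
outside the current field has degree exactly `p`; as `[l : E]` divides `p ^ r`, at most `r` of
them generate `l` over `E`. The universal derivation kills `k` and `lᵖ`, so their differentials
span `Ω[l⁄k]`.
-/

universe u

open Module IntermediateField

theorem Subfield.comap_frobenius_map_fieldRange_frobenius {K L : Type*} [Field K] [Field L]
    (p : ℕ) [ExpChar K p] [ExpChar L p] (f : K →+* L) :
    ((frobenius K p).fieldRange.map f).comap (frobenius L p) = f.fieldRange := by
  ext x
  simp only [mem_comap, mem_map, RingHom.mem_fieldRange, exists_exists_eq_and]
  refine exists_congr fun c => ⟨fun h => frobenius_inj L p ?_, fun h => ?_⟩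
  · rwa [← RingHom.map_frobenius]
  · rw [RingHom.map_frobenius, h]

theorem finrank_frobenius_fieldRange_eq (p : ℕ) (K L : Type*) [Field K] [Field L]
    [ExpChar K p] [ExpChar L p] [Algebra K L] [FiniteDimensional K L] :
    finrank (frobenius L p).fieldRange L = finrank (frobenius K p).fieldRange K := by
  set j := algebraMap K L
  set F := j.fieldRange
  set Lp := (frobenius L p).fieldRange
  set Fp := (frobenius K p).fieldRange.map j
  have hFp_F : Fp ≤ F := by
    rintro _ ⟨c, -, rfl⟩
    exact ⟨c, rfl⟩
  have hFp_Lp : Fp ≤ Lp := by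
    rintro _ ⟨_, ⟨c, rfl⟩, rfl⟩
    exact ⟨j c, (RingHom.map_frobenius j p c).symm⟩
  have hK : Subfield.relfinrank Fp F = finrank (frobenius K p).fieldRange K := by
    rw [← Subfield.relfinrank_top_right, ← Subfield.relfinrank_map_map _ _ j,
      ← RingHom.fieldRange_eq_map]
  have hL : finrank F L = Subfield.relfinrank Fp Lp := by
    rw [← Subfield.finrank_comap, Subfield.comap_frobenius_map_fieldRange_frobenius]
  have hFL : finrank F L = finrank K L :=
    (Algebra.finrank_eq_of_equiv_equiv j.rangeRestrictFieldEquiv (RingEquiv.refl L) rfl).symm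
  have hpos : 0 < finrank F L := hFL ▸ finrank_pos
  have htower := (Subfield.relfinrank_mul_finrank_top hFp_F).trans
    (Subfield.relfinrank_mul_finrank_top hFp_Lp).symm
  rw [hK, ← hL, mul_comm] at htower
  exact (Nat.eq_of_mul_eq_mul_left hpos htower).symm

theorem IntermediateField.finrank_adjoin_simple_eq_of_pow_mem {K L : Type*} [Field K] [Field L]
    [Algebra K L] (p : ℕ) [Fact p.Prime] [ExpChar L p] {x : L}
    (hx : x ∉ (⊥ : IntermediateField K L)) (hxp : x ^ p ∈ (⊥ : IntermediateField K L)) :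
    finrank K K⟮x⟯ = p := by
  have hp : p.Prime := Fact.out
  obtain ⟨c, hc⟩ := mem_bot.mp hxp
  have hirr : Irreducible (Polynomial.X ^ p - Polynomial.C c) := by
    refine X_pow_sub_C_irreducible_of_prime hp fun b hb =>
      hx (mem_bot.mpr ⟨b, frobenius_inj L p ?_⟩)
    simp only [frobenius_def, ← map_pow, hb, hc]
  have hmonic := Polynomial.monic_X_pow_sub_C c hp.ne_zero
  have hroot : Polynomial.aeval x (Polynomial.X ^ p - Polynomial.C c) = 0 := by simp [hc]
  rw [adjoin.finrank ⟨_, hmonic, hroot⟩, ← minpoly.eq_of_irreducible_of_monic hirr hroot hmonic,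
    Polynomial.natDegree_X_pow_sub_C]

theorem IntermediateField.exists_finset_adjoin_eq_top_of_pow_mem {K L : Type u} [Field K]
    [Field L] [Algebra K L] [FiniteDimensional K L] (p : ℕ) [Fact p.Prime] [ExpChar L p]
    (hL : ∀ x : L, x ^ p ∈ (⊥ : IntermediateField K L)) {m : ℕ} (h : finrank K L ≤ p ^ m) :
    ∃ s : Finset L, s.card ≤ m ∧ adjoin K (s : Set L) = ⊤ := by
  induction m generalizing K with
  | zero =>
    refine ⟨∅, le_rfl, ?_⟩
    rw [Finset.coe_empty, adjoin_empty, bot_eq_top_iff_finrank_eq_one]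
    exact le_antisymm (by simpa using h) finrank_pos
  | succ m ih =>
    by_cases hbot : (⊥ : IntermediateField K L) = ⊤
    · exact ⟨∅, by simp, by simpa⟩
    obtain ⟨x, -, hx⟩ := SetLike.exists_of_lt (lt_top_iff_ne_top.mpr hbot)
    have hdeg := finrank_adjoin_simple_eq_of_pow_mem p hx (hL x)
    have hL' : ∀ z : L, z ^ p ∈ (⊥ : IntermediateField K⟮x⟯ L) := fun z => by
      obtain ⟨c, hc⟩ := mem_bot.mp (hL z)
      exact mem_bot.mpr ⟨algebraMap K K⟮x⟯ c, hc⟩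
    have hle : finrank K⟮x⟯ L ≤ p ^ m := by
      rw [← finrank_mul_finrank K K⟮x⟯ L, hdeg, pow_succ'] at h
      exact Nat.le_of_mul_le_mul_left h (Fact.out : p.Prime).pos
    obtain ⟨t, htc, htop⟩ := ih hL' hle
    classical
    refine ⟨insert x t, (Finset.card_insert_le _ _).trans (by omega), ?_⟩
    rw [Finset.coe_insert, Set.insert_eq, ← adjoin_adjoin_left, htop, restrictScalars_top]

theorem Subfield.exists_finset_sup_closure_eq_top {L : Type*} [Field L] (p : ℕ) [Fact p.Prime]
    [ExpChar L p] {m : ℕ} (hL : finrank (frobenius L p).fieldRange L = p ^ m) {E : Subfield L}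
    (hE : (frobenius L p).fieldRange ≤ E) :
    ∃ s : Finset L, s.card ≤ m ∧ E ⊔ Subfield.closure s = ⊤ := by
  have hdvd : finrank E L ∣ p ^ m :=
    hL ▸ Dvd.intro_left _ (Subfield.relfinrank_mul_finrank_top hE)
  have hpm : 0 < p ^ m := pow_pos (Fact.out : p.Prime).pos m
  have : FiniteDimensional E L := .of_finrank_pos (Nat.pos_of_dvd_of_pos hdvd hpm)
  obtain ⟨s, hcard, hs⟩ := exists_finset_adjoin_eq_top_of_pow_mem p
    (fun x => mem_bot.mpr ⟨⟨x ^ p, hE ⟨x, rfl⟩⟩, rfl⟩) (Nat.le_of_dvd hpm hdvd)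
  refine ⟨s, hcard, ?_⟩
  have := congrArg toSubfield hs
  rwa [adjoin_toSubfield, top_toSubfield, Subfield.closure_union,
    show Set.range (algebraMap E L) = E from Subtype.range_coe, Subfield.closure_eq] at this

theorem Derivation.apply_mem_of_mem_closure {R L M : Type*} [CommRing R] [Field L] [Algebra R L]
    [AddCommGroup M] [Module L M] [Module R M] (D : Derivation R L M) {W : Submodule L M}
    {s : Set L} (hs : ∀ x ∈ s, D x ∈ W) {x : L} (hx : x ∈ Subfield.closure s) : D x ∈ W := by
  induction hx using Subfield.closure_induction with
  | mem x hx => exact hs x hx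
  | one => simp
  | add x y _ _ hx hy => rw [map_add]; exact W.add_mem hx hy
  | neg x _ hx => rw [map_neg]; exact W.neg_mem hx
  | inv x _ hx => rw [leibniz_inv]; exact W.smul_mem _ hx
  | mul x y _ _ hx hy => rw [leibniz]; exact W.add_mem (W.smul_mem _ hy) (W.smul_mem _ hx)

theorem KaehlerDifferential.span_D_image_eq_top_of_sup_closure_eq_top {K L : Type*} [Field K]
    [Field L] [Algebra K L] (p : ℕ) [Fact p.Prime] [CharP L p] {s : Set L}
    (hs : (algebraMap K L).fieldRange ⊔ (frobenius L p).fieldRange ⊔ Subfield.closure s = ⊤) :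
    Submodule.span L (D K L '' s) = ⊤ := by
  rw [eq_top_iff, ← span_range_derivation, Submodule.span_le]
  rintro _ ⟨a, rfl⟩
  refine (D K L).apply_mem_of_mem_closure
    (s := ((algebraMap K L).fieldRange ∪ (frobenius L p).fieldRange : Set L) ∪ s) ?_ ?_
  · rintro x ((⟨c, rfl⟩ | ⟨y, rfl⟩) | hx)
    · simp
    · rw [frobenius_def, Derivation.leibniz_pow, ← Nat.cast_smul_eq_nsmul L, CharP.cast_eq_zero,
        zero_smul]
      exact zero_mem _
    · exact Submodule.subset_span (Set.mem_image_of_mem _ hx)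
  · rw [Subfield.closure_union, Subfield.closure_union, Subfield.closure_eq, Subfield.closure_eq,
      hs]
    trivial

/-- Let `k` be a field of characteristic `p` with `[k : kᵖ] = p ^ r`, and `l / k` a finite field
extension.  Then `[l : lᵖ] = p ^ r` and the module of Kähler differentials `Ω[l⁄k]` can be
generated by at most `r` elements. -/
theorem stmt_4 (p r : ℕ) [Fact p.Prime] (k l : Type*) [Field k] [Field l] [CharP k p] [CharP l p]
    [Algebra k l] [FiniteDimensional k l]
    (hk : Module.finrank (frobenius k p).fieldRange k = p ^ r) :
    Module.finrank (frobenius l p).fieldRange l = p ^ r ∧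
      ∃ s : Finset (Ω[l⁄k]), s.card ≤ r ∧ Submodule.span l (s : Set (Ω[l⁄k])) = ⊤ := by
  classical
  have hl : finrank (frobenius l p).fieldRange l = p ^ r :=
    (finrank_frobenius_fieldRange_eq p k l).trans hk
  obtain ⟨s, hcard, hs⟩ := Subfield.exists_finset_sup_closure_eq_top p hl
    (le_sup_right : _ ≤ (algebraMap k l).fieldRange ⊔ _)
  refine ⟨hl, s.image (KaehlerDifferential.D k l), Finset.card_image_le.trans hcard, ?_⟩
  rw [Finset.coe_image]
  exact KaehlerDifferential.span_D_image_eq_top_of_sup_closure_eq_top p hs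
end

section
/- Let L be a field with a discrete valuation v, K a subfield with [L:K] finite, and suppose the residue field extension satisfies [l:k] = [L:K] and l = k(x̄) for some x in the valuation ring O_L. Then O_L = O_K[x]. -/
open Polynomial IsLocalRing

/-- Let `L/K` be a finite extension of fields, `O_L ⊆ L` and `O_K ⊆ K` the valuation rings of a
discrete valuation `v` of `L` and of its restriction to `K` (modelled by discrete valuation
rings `A`, `B` with fraction fields `K`, `L`, `B` being the integral closure of `A` in `L` and
`A → B` local).  If the residue extension satisfies `[l : k] = [L : K]` and `l = k(x̄)` for some
`x ∈ O_L`, then `O_L = O_K[x]`. -/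
theorem stmt_5 (A B K L : Type*) [CommRing A] [CommRing B] [IsDomain A] [IsDomain B]
    [IsDiscreteValuationRing A] [IsDiscreteValuationRing B] [Field K] [Field L]
    [Algebra A K] [IsFractionRing A K] [Algebra B L] [IsFractionRing B L]
    [Algebra A B] [Algebra K L] [Algebra A L] [IsScalarTower A B L] [IsScalarTower A K L]
    [FiniteDimensional K L] [IsIntegralClosure B A L]
    [IsLocalHom (algebraMap A B)]
    (x : B)
    (hdeg :
      letI : Algebra (IsLocalRing.ResidueField A) (IsLocalRing.ResidueField B) :=
        (IsLocalRing.ResidueField.map (algebraMap A B)).toAlgebra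
      Module.finrank (IsLocalRing.ResidueField A) (IsLocalRing.ResidueField B) =
        Module.finrank K L)
    (hgen :
      letI : Algebra (IsLocalRing.ResidueField A) (IsLocalRing.ResidueField B) :=
        (IsLocalRing.ResidueField.map (algebraMap A B)).toAlgebra
      Algebra.adjoin (IsLocalRing.ResidueField A) {IsLocalRing.residue B x} = ⊤) :
    Algebra.adjoin A {x} = ⊤ := by
  classical
  letI : Algebra (ResidueField A) (ResidueField B) :=
    (ResidueField.map (algebraMap A B)).toAlgebra
  set k := ResidueField A
  set l := ResidueField B
  set xb : l := residue B x with hxb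
  -- injectivity of A → B
  have hABinj : Function.Injective (algebraMap A B) := by
    have h1 : Function.Injective (algebraMap A L) := by
      rw [IsScalarTower.algebraMap_eq A K L]
      exact (algebraMap K L).injective.comp (IsFractionRing.injective A K)
    rw [IsScalarTower.algebraMap_eq A B L] at h1
    exact Function.Injective.of_comp h1
  have hxint : IsIntegral A x := IsIntegralClosure.isIntegral A L x
  set g := minpoly A x with hg
  have hgmonic : g.Monic := minpoly.monic hxint
  -- residue computations
  have hφ : (ResidueField.map (algebraMap A B)).comp (residue A)
      = (residue B).comp (algebraMap A B) := by
    ext a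
    simp [ResidueField.map_residue]
  have hresid : ∀ q : A[X], residue B (Polynomial.aeval x q)
      = Polynomial.aeval xb (q.map (residue A)) := by
    intro q
    rw [Polynomial.aeval_def, Polynomial.hom_eval₂, Polynomial.aeval_def,
      RingHom.algebraMap_toAlgebra, ← hφ, ← Polynomial.eval₂_map]
  have hgbar0 : Polynomial.aeval xb (g.map (residue A)) = 0 := by
    rw [← hresid, minpoly.aeval, map_zero]
  have hxbint : IsIntegral k xb := ⟨g.map (residue A), hgmonic.map _, hgbar0⟩
  -- finrank of residue extension
  have hfr : Module.finrank k l = (minpoly k xb).natDegree := by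
    have h := ((Algebra.adjoin.powerBasis hxbint).map
      ((Subalgebra.equivOfEq _ _ hgen).trans Subalgebra.topEquiv)).finrank
    simp only [PowerBasis.map_dim, Algebra.adjoin.powerBasis_dim] at h; convert h using 2
    · rfl
    · refine Module.ext' _ _ fun r m => ?_
      obtain ⟨a, rfl⟩ := residue_surjective r
      simp [Algebra.smul_def]
      rw [RingHom.algebraMap_toAlgebra, ResidueField.map_residue, ← ResidueField.algebraMap_residue]
      exact @Algebra.smul_def _ _ _ _ ResidueField.instAlgebra _ _
  have hmk : (minpoly k xb).natDegree = Module.finrank K L := by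
    rw [← hfr]; exact hdeg
  -- degree of g equals [L:K]
  set y : L := algebraMap B L x with hy'
  have hyminp : minpoly K y = g.map (algebraMap A K) :=
    minpoly.isIntegrallyClosed_eq_field_fractions K L hxint
  have hdegg : g.natDegree = Module.finrank K L := by
    have h1 : g.natDegree ≤ Module.finrank K L := by
      have := minpoly.natDegree_le (A := K) y
      rwa [hyminp, hgmonic.natDegree_map] at this
    have h2 : Module.finrank K L ≤ g.natDegree := by
      have hdvd : minpoly k xb ∣ g.map (residue A) := minpoly.dvd k xb hgbar0
      have := Polynomial.natDegree_le_of_dvd hdvd (hgmonic.map (residue A)).ne_zero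
      rwa [hgmonic.natDegree_map, hmk] at this
    omega
  -- L = K[y]
  have hyint : IsIntegral K y := IsIntegral.of_finite K y
  have htop : Algebra.adjoin K {y} = ⊤ := by
    have h1 : Module.finrank K (Algebra.adjoin K {y}) = Module.finrank K L := by
      have h := (Algebra.adjoin.powerBasis hyint).finrank
      simp only [Algebra.adjoin.powerBasis_dim] at h
      rw [h, hyminp, hgmonic.natDegree_map, hdegg]
    rw [← Algebra.toSubmodule_eq_top]
    exact Submodule.eq_top_of_finrank_eq
      (by rwa [Subalgebra.finrank_toSubmodule])
  -- uniformizer facts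
  obtain ⟨π, hπ⟩ := IsDiscreteValuationRing.exists_irreducible A
  have hπB0 : algebraMap A B π ≠ 0 := fun h =>
    hπ.ne_zero (hABinj (by simpa using h))
  have hπres : residue B (algebraMap A B π) = 0 := by
    rw [residue_eq_zero_iff, mem_maximalIdeal]
    intro h
    exact hπ.not_isUnit (IsUnit.of_map (algebraMap A B) π h)
  have hmaxA : maximalIdeal A = Ideal.span {π} :=
    (IsDiscreteValuationRing.irreducible_iff_uniformizer π).mp hπ
  -- key descent step
  have step : ∀ b : B, algebraMap A B π * b ∈ Algebra.adjoin A {x} →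
      b ∈ Algebra.adjoin A {x} := by
    intro b hb
    rw [Algebra.adjoin_singleton_eq_range_aeval, AlgHom.mem_range] at hb ⊢
    obtain ⟨q, hq⟩ := hb
    set rem := q %ₘ g with hrem
    have hq' : Polynomial.aeval x rem = algebraMap A B π * b := by
      have hmd := Polynomial.modByMonic_add_div q g
      rw [← hq]
      conv_rhs => rw [← hmd]
      rw [map_add, map_mul, hg, minpoly.aeval, zero_mul, add_zero]
    have h0 : Polynomial.aeval xb (rem.map (residue A)) = 0 := by
      rw [← hresid, hq', map_mul, hπres, zero_mul]
    have hzero : rem.map (residue A) = 0 := by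
      by_contra hne
      have hle := minpoly.degree_le_of_ne_zero k xb hne h0
      have hlt : (rem.map (residue A)).degree < (minpoly k xb).degree := by
        calc (rem.map (residue A)).degree ≤ rem.degree := Polynomial.degree_map_le
          _ < g.degree := Polynomial.degree_modByMonic_lt q hgmonic
          _ = (g.natDegree : WithBot ℕ) := Polynomial.degree_eq_natDegree hgmonic.ne_zero
          _ = ((minpoly k xb).natDegree : WithBot ℕ) := by rw [hdegg, hmk]
          _ = (minpoly k xb).degree :=
            (Polynomial.degree_eq_natDegree (minpoly.ne_zero hxbint)).symm
      exact absurd hle (not_le.mpr hlt)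
    have hdvd : Polynomial.C π ∣ rem := by
      rw [Polynomial.C_dvd_iff_dvd_coeff]
      intro i
      have hcz : residue A (rem.coeff i) = 0 := by
        have := Polynomial.ext_iff.mp hzero i
        simpa [Polynomial.coeff_map] using this
      rw [residue_eq_zero_iff, hmaxA, Ideal.mem_span_singleton] at hcz
      exact hcz
    obtain ⟨rem', hrem'⟩ := hdvd
    refine ⟨rem', ?_⟩
    have heq : algebraMap A B π * Polynomial.aeval x rem'
        = algebraMap A B π * b := by
      rw [← hq', hrem']
      simp [mul_comm]
    exact mul_left_cancel₀ hπB0 heq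
  -- iterated descent
  have ind : ∀ (r : ℕ) (b : B), algebraMap A B π ^ r * b ∈ Algebra.adjoin A {x} →
      b ∈ Algebra.adjoin A {x} := by
    intro r
    induction r with
    | zero => intro b hb; simpa using hb
    | succ r ih =>
      intro b hb
      refine step b (ih _ ?_)
      rw [← mul_assoc, ← pow_succ]
      exact hb
  -- main argument
  rw [eq_top_iff]
  rintro b -
  have hbL : algebraMap B L b ∈ Algebra.adjoin K {y} := htop ▸ Algebra.mem_top
  rw [Algebra.adjoin_singleton_eq_range_aeval, AlgHom.mem_range] at hbL
  obtain ⟨p, hp⟩ := hbL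
  obtain ⟨c, hc⟩ := IsLocalization.integerNormalization_spec (nonZeroDivisors A) p
  set q := IsLocalization.integerNormalization (nonZeroDivisors A) p with hq
  have hqmap : q.map (algebraMap A K) = Polynomial.C (algebraMap A K (c : A)) * p := by
    ext i
    rw [hc.2, Polynomial.coeff_smul, Polynomial.coeff_C_mul, Algebra.smul_def]
  have key : Polynomial.aeval x q = algebraMap A B (c : A) * b := by
    apply IsFractionRing.injective B L
    rw [← Polynomial.aeval_algebraMap_apply, map_mul,
      ← IsScalarTower.algebraMap_apply A B L, IsScalarTower.algebraMap_apply A K L,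
      ← Polynomial.aeval_map_algebraMap K, hqmap, map_mul, Polynomial.aeval_C, hp]
  have hc0 : (c : A) ≠ 0 := nonZeroDivisors.ne_zero hc.1
  obtain ⟨r, u, hu⟩ := IsDiscreteValuationRing.eq_unit_mul_pow_irreducible hc0 hπ
  have hmem : algebraMap A B (c : A) * b ∈ Algebra.adjoin A {x} := by
    rw [← key, Algebra.adjoin_singleton_eq_range_aeval, AlgHom.mem_range]
    exact ⟨q, rfl⟩
  refine ind r b ?_
  have h2 : ((u⁻¹ : Aˣ) : A) * (c : A) = π ^ r := by
    rw [hu, ← mul_assoc, Units.inv_mul, one_mul]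
  have h3 : algebraMap A B π ^ r * b
      = algebraMap A B ((u⁻¹ : Aˣ) : A) * (algebraMap A B (c : A) * b) := by
    rw [← mul_assoc, ← map_mul, h2, map_pow]
  rw [h3]
  exact Subalgebra.mul_mem _ (Subalgebra.algebraMap_mem _ _) hmem
end

section
/- Let L be a field with discrete valuation v, K a subfield with n = [L:K] finite, and suppose the ramification index equals n, i.e. the maximal ideal of O_K generates m_L^n in O_L. Then O_L = O_K[π] where π is a uniformizer of O_L; moreover 1, π, ..., π^{n-1} form an O_K-basis of O_L. -/
open Finset in
private lemma star_lemma {A B : Type*} [CommRing A] [CommRing B] [IsDomain B]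
    (f : A →+* B) (t : A) (π : B) (n : ℕ) (hπ0 : π ≠ 0)
    (hloc : ∀ a : A, f a ∈ Ideal.span {π} → t ∣ a)
    (htB : Ideal.span {f t} = Ideal.span {π ^ n}) :
    ∀ m, m ≤ n → ∀ a : ℕ → A,
      (∑ i ∈ range m, f (a i) * π ^ i) ∈ Ideal.span {π ^ m} →
      ∀ i < m, t ∣ a i := by
  intro m
  induction m with
  | zero => intro _ a _ i hi; omega
  | succ m ih =>
    intro hmn a hsum i hi
    rw [Finset.sum_range_succ'] at hsum
    set S : B := ∑ i ∈ range m, f (a (i + 1)) * π ^ i with hSdef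
    have hS : (∑ i ∈ range m, f (a (i + 1)) * π ^ (i + 1)) = π * S := by
      rw [hSdef, Finset.mul_sum]
      exact Finset.sum_congr rfl fun j _ => by ring
    rw [hS] at hsum
    have h0 : t ∣ a 0 := by
      apply hloc
      have h1 : f (a 0) = (π * S + f (a 0) * π ^ 0) - π * S := by ring
      rw [h1]
      refine Ideal.sub_mem _
        (Ideal.span_singleton_le_span_singleton.mpr (dvd_pow_self π (Nat.succ_ne_zero m)) hsum)
        (Ideal.mem_span_singleton.mpr ⟨S, rfl⟩)
    have hfa0 : f (a 0) * π ^ 0 ∈ Ideal.span {π ^ (m + 1)} := by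
      obtain ⟨c, hc⟩ := h0
      have hmem : f (a 0) ∈ Ideal.span {f t} :=
        Ideal.mem_span_singleton.mpr ⟨f c, by rw [← map_mul, ← hc]⟩
      rw [htB] at hmem
      have : f (a 0) ∈ Ideal.span {π ^ (m + 1)} :=
        Ideal.span_singleton_le_span_singleton.mpr (pow_dvd_pow π hmn) hmem
      simpa using this
    have hS2 : π * S ∈ Ideal.span {π ^ (m + 1)} := by
      have := Ideal.sub_mem _ hsum hfa0
      simpa using this
    obtain ⟨x, hx⟩ := Ideal.mem_span_singleton.mp hS2
    have hcS : S = π ^ m * x := mul_left_cancel₀ hπ0 (by rw [hx]; ring)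
    have hrec := ih (Nat.le_of_succ_le hmn) (fun j => a (j + 1))
      (Ideal.mem_span_singleton.mpr ⟨x, hcS⟩)
    rcases i with _ | j
    · exact h0
    · exact hrec j (by omega)

open Finset in
private lemma indep_lemma {A B : Type*} [CommRing A] [IsDomain A] [IsDiscreteValuationRing A]
    [CommRing B] [IsDomain B]
    (f : A →+* B) (t : A) (π : B) (n : ℕ) (hπ0 : π ≠ 0) (ht : Irreducible t)
    (hf : Function.Injective f)
    (hloc : ∀ a : A, f a ∈ Ideal.span {π} → t ∣ a)
    (htB : Ideal.span {f t} = Ideal.span {π ^ n}) :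
    ∀ a : ℕ → A, (∑ i ∈ range n, f (a i) * π ^ i) = 0 → ∀ i < n, a i = 0 := by
  have hft : f t ≠ 0 := fun h => ht.ne_zero (hf (by rw [h, map_zero]))
  have key : ∀ m, ∀ a : ℕ → A, (∑ i ∈ range n, f (a i) * π ^ i) = 0 →
      ∀ i < n, t ^ m ∣ a i := by
    intro m
    induction m with
    | zero => intro a _ i _; simpa using one_dvd _
    | succ m ih =>
      intro a ha i hi
      have h1 : ∀ j < n, t ∣ a j :=
        star_lemma f t π n hπ0 hloc htB n le_rfl a (by rw [ha]; exact Ideal.zero_mem _)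
      classical
      set a' : ℕ → A := fun j => if h : j < n then (h1 j h).choose else 0 with ha'def
      have ha' : ∀ j < n, a j = t * a' j := by
        intro j hj
        simp only [ha'def, dif_pos hj]
        exact (h1 j hj).choose_spec
      have hsum : (0 : B) = f t * ∑ j ∈ range n, f (a' j) * π ^ j := by
        rw [← ha, Finset.mul_sum]
        refine Finset.sum_congr rfl fun j hj => ?_
        rw [ha' j (Finset.mem_range.mp hj), map_mul]; ring
      have h2 : (∑ j ∈ range n, f (a' j) * π ^ j) = 0 := by
        rcases mul_eq_zero.mp hsum.symm with h | h
        · exact absurd h hft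
        · exact h
      have := ih a' h2 i hi
      rw [ha' i hi, pow_succ]
      exact (mul_comm t (a' i)) ▸ mul_dvd_mul this dvd_rfl
  intro a ha i hi
  by_contra hne
  obtain ⟨k, u, hu⟩ := IsDiscreteValuationRing.eq_unit_mul_pow_irreducible hne ht
  have hdvd := key (k + 1) a ha i hi
  rw [hu, pow_succ, mul_comm (↑u : A) (t ^ k)] at hdvd
  have : t ∣ (u : A) := (mul_dvd_mul_iff_left (pow_ne_zero k ht.ne_zero)).mp hdvd
  exact ht.not_isUnit (isUnit_of_dvd_unit this u.isUnit)

open Finset in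
private lemma span_lemma {A B : Type*} [CommRing A] [IsDomain A] [IsDiscreteValuationRing A]
    [CommRing B] [IsDomain B]
    (f : A →+* B) (t : A) (π : B) (n : ℕ) (hπ0 : π ≠ 0) (ht : Irreducible t)
    (hf : Function.Injective f)
    (hloc : ∀ a : A, f a ∈ Ideal.span {π} → t ∣ a)
    (htB : Ideal.span {f t} = Ideal.span {π ^ n}) :
    ∀ (m : ℕ) (u : Aˣ) (b : B) (a : ℕ → A),
      f (↑u * t ^ m) * b = ∑ i ∈ range n, f (a i) * π ^ i →
      ∃ a' : ℕ → A, b = ∑ i ∈ range n, f (a' i) * π ^ i := by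
  have hft : f t ≠ 0 := fun h => ht.ne_zero (hf (by rw [h, map_zero]))
  intro m
  induction m with
  | zero =>
    intro u b a h
    refine ⟨fun i => ↑u⁻¹ * a i, ?_⟩
    have hb : b = f ↑u⁻¹ * (f (↑u * t ^ 0) * b) := by
      rw [← mul_assoc, ← map_mul]
      simp
    rw [hb, h, Finset.mul_sum]
    refine Finset.sum_congr rfl fun j _ => ?_
    rw [map_mul]; ring
  | succ m ih =>
    intro u b a h
    have hmem : (∑ i ∈ range n, f (a i) * π ^ i) ∈ Ideal.span {π ^ n} := by
      rw [← h, ← htB]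
      refine Ideal.mem_span_singleton.mpr ⟨f (↑u * t ^ m) * b, ?_⟩
      rw [← mul_assoc, ← map_mul]
      ring_nf
    have h1 : ∀ j < n, t ∣ a j := star_lemma f t π n hπ0 hloc htB n le_rfl a hmem
    classical
    set a'' : ℕ → A := fun j => if h : j < n then (h1 j h).choose else 0 with ha''def
    have ha'' : ∀ j < n, a j = t * a'' j := by
      intro j hj
      simp only [ha''def, dif_pos hj]
      exact (h1 j hj).choose_spec
    have hsum : (∑ i ∈ range n, f (a i) * π ^ i) = f t * ∑ j ∈ range n, f (a'' j) * π ^ j := by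
      rw [Finset.mul_sum]
      refine Finset.sum_congr rfl fun j hj => ?_
      rw [ha'' j (Finset.mem_range.mp hj), map_mul]; ring
    have h2 : f (↑u * t ^ m) * b = ∑ j ∈ range n, f (a'' j) * π ^ j := by
      apply mul_left_cancel₀ hft
      rw [← hsum, ← h, ← mul_assoc, ← map_mul]
      ring_nf
    exact ih u b a'' h2

/-- Let `L/K` be a finite extension of fields of degree `n`, with discrete valuation rings
`O_K = A ⊆ K`, `O_L = B ⊆ L` as before (`B` the integral closure of `A` in `L`, `A → B` local).
If the extension is totally ramified, i.e. the maximal ideal of `A` generates `m_L ^ n` in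
`O_L`, then `O_L = O_K[π]` for any uniformizer `π` of `O_L`; moreover `1, π, …, π^{n-1}` form
an `O_K`-basis of `O_L`. -/
theorem stmt_6 (A B K L : Type*) [CommRing A] [CommRing B] [IsDomain A] [IsDomain B]
    [IsDiscreteValuationRing A] [IsDiscreteValuationRing B] [Field K] [Field L]
    [Algebra A K] [IsFractionRing A K] [Algebra B L] [IsFractionRing B L]
    [Algebra A B] [Algebra K L] [Algebra A L] [IsScalarTower A B L] [IsScalarTower A K L]
    [FiniteDimensional K L] [IsIntegralClosure B A L]
    [IsLocalHom (algebraMap A B)]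
    (hram : Ideal.map (algebraMap A B) (IsLocalRing.maximalIdeal A) =
      IsLocalRing.maximalIdeal B ^ Module.finrank K L) :
    ∀ π : B, IsLocalRing.maximalIdeal B = Ideal.span {π} →
      Algebra.adjoin A {π} = ⊤ ∧
        ∃ b : Module.Basis (Fin (Module.finrank K L)) A B, ∀ i, b i = π ^ (i : ℕ) := by
  intro π hπ
  classical
  have hn0 : 0 < Module.finrank K L := Module.finrank_pos
  set n := Module.finrank K L with hn
  have hπ0 : π ≠ 0 := by
    intro h
    exact IsDiscreteValuationRing.not_a_field B (by rw [hπ, h, Ideal.span_singleton_eq_bot.mpr rfl])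
  obtain ⟨t, ht⟩ := IsDiscreteValuationRing.exists_irreducible A
  have htmax : IsLocalRing.maximalIdeal A = Ideal.span {t} :=
    (IsDiscreteValuationRing.irreducible_iff_uniformizer t).mp ht
  have hinjL : Function.Injective (algebraMap A L) := by
    rw [IsScalarTower.algebraMap_eq A K L]
    exact (algebraMap K L).injective.comp (IsFractionRing.injective A K)
  have hinjBL : Function.Injective (algebraMap B L) := IsFractionRing.injective B L
  have hinj : Function.Injective (algebraMap A B) := by
    have h := hinjL
    rw [IsScalarTower.algebraMap_eq A B L] at h
    exact Function.Injective.of_comp h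
  have htB : Ideal.span {algebraMap A B t} = Ideal.span {π ^ n} := by
    have h1 : Ideal.map (algebraMap A B) (Ideal.span {t}) = Ideal.span {algebraMap A B t} := by
      rw [Ideal.map_span]; simp
    rw [← h1, ← htmax, hram, hπ, Ideal.span_singleton_pow]
  have hloc : ∀ a : A, algebraMap A B a ∈ Ideal.span {π} → t ∣ a := by
    intro a ha
    have hna : ¬ IsUnit a := fun hu =>
      (IsLocalRing.mem_maximalIdeal _).mp (hπ ▸ ha) (hu.map (algebraMap A B))
    rw [← Ideal.mem_span_singleton, ← htmax]
    exact (IsLocalRing.mem_maximalIdeal _).mpr hna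
  have transfer : ∀ a : Fin n → A,
      algebraMap B L (∑ i : Fin n, algebraMap A B (a i) * π ^ (i : ℕ)) =
        ∑ i : Fin n, algebraMap A K (a i) • (algebraMap B L π) ^ (i : ℕ) := by
    intro a
    rw [map_sum]
    refine Finset.sum_congr rfl fun i _ => ?_
    rw [map_mul, map_pow, Algebra.smul_def, ← IsScalarTower.algebraMap_apply A K L,
      ← IsScalarTower.algebraMap_apply A B L]
  have finconv : ∀ a : Fin n → A,
      (∑ i : Fin n, algebraMap A B (a i) * π ^ (i : ℕ)) =
        ∑ i ∈ Finset.range n, algebraMap A B (if h : i < n then a ⟨i, h⟩ else 0) * π ^ i := by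
    intro a
    rw [Finset.sum_range]
    exact Finset.sum_congr rfl fun i _ => by simp [i.isLt]
  have indA : ∀ a : Fin n → A,
      (∑ i : Fin n, algebraMap A B (a i) * π ^ (i : ℕ)) = 0 → ∀ i, a i = 0 := by
    intro a ha i
    rw [finconv] at ha
    have h := indep_lemma (algebraMap A B) t π n hπ0 ht hinj hloc htB _ ha i i.isLt
    simpa [i.isLt] using h
  have liA : LinearIndependent A (fun i : Fin n => π ^ (i : ℕ)) := by
    rw [Fintype.linearIndependent_iff]
    intro g hg
    apply indA g
    rw [← hg]
    exact Finset.sum_congr rfl fun j _ => (Algebra.smul_def _ _).symm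
  have liK : LinearIndependent K (fun i : Fin n => (algebraMap B L π) ^ (i : ℕ)) := by
    rw [Fintype.linearIndependent_iff]
    intro g hg i
    obtain ⟨s, hs⟩ := IsLocalization.exist_integer_multiples (nonZeroDivisors A) Finset.univ g
    simp only [IsLocalization.IsInteger, RingHom.mem_range] at hs
    choose a haeq using fun i => hs i (Finset.mem_univ i)
    have hzero : (∑ j : Fin n, algebraMap A B (a j) * π ^ (j : ℕ)) = 0 := by
      apply hinjBL
      rw [map_zero, transfer]
      calc ∑ j : Fin n, algebraMap A K (a j) • (algebraMap B L π) ^ (j : ℕ)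
          = ∑ j : Fin n, ((s : A) • g j) • (algebraMap B L π) ^ (j : ℕ) :=
            Finset.sum_congr rfl fun j _ => by rw [haeq]
        _ = (s : A) • ∑ j : Fin n, g j • (algebraMap B L π) ^ (j : ℕ) := by
            rw [Finset.smul_sum]
            exact Finset.sum_congr rfl fun j _ => smul_assoc _ _ _
        _ = 0 := by rw [hg, smul_zero]
    have ha0 := indA a hzero
    have h1 : (0 : K) = (s : A) • g i := by rw [← haeq i, ha0 i, map_zero]
    have hs0 : (algebraMap A K (s : A)) ≠ 0 := fun h =>
      nonZeroDivisors.ne_zero s.2 (IsFractionRing.injective A K (by rw [h, map_zero]))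
    rw [Algebra.smul_def] at h1
    exact ((mul_eq_zero.mp h1.symm).resolve_left hs0)
  have hnonempty : Nonempty (Fin n) := ⟨⟨0, hn0⟩⟩
  let p : Module.Basis (Fin n) K L := basisOfLinearIndependentOfCardEqFinrank liK (by simp [hn])
  have hp : ∀ i : Fin n, p i = (algebraMap B L π) ^ (i : ℕ) := fun i => by
    simp [p, coe_basisOfLinearIndependentOfCardEqFinrank]
  have hspan : ∀ b : B, b ∈ Submodule.span A (Set.range fun i : Fin n => π ^ (i : ℕ)) := by
    intro b
    obtain ⟨s, hs⟩ := IsLocalization.exist_integer_multiples (nonZeroDivisors A) Finset.univ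
      (fun i : Fin n => p.repr (algebraMap B L b) i)
    simp only [IsLocalization.IsInteger, RingHom.mem_range] at hs
    choose a haeq using fun i => hs i (Finset.mem_univ i)
    have hrepr : algebraMap B L b
        = ∑ i : Fin n, p.repr (algebraMap B L b) i • (algebraMap B L π) ^ (i : ℕ) := by
      conv_lhs => rw [← p.sum_repr (algebraMap B L b)]
      exact Finset.sum_congr rfl fun i _ => by rw [hp]
    have heq : algebraMap A B (s : A) * b = ∑ i : Fin n, algebraMap A B (a i) * π ^ (i : ℕ) := by
      apply hinjBL
      rw [transfer]
      calc algebraMap B L (algebraMap A B (s : A) * b)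
          = algebraMap A L (s : A) * algebraMap B L b := by
            rw [map_mul, ← IsScalarTower.algebraMap_apply A B L]
        _ = (s : A) • algebraMap B L b := (Algebra.smul_def _ _).symm
        _ = ∑ i : Fin n, algebraMap A K (a i) • (algebraMap B L π) ^ (i : ℕ) := by
            rw [hrepr, Finset.smul_sum]
            exact Finset.sum_congr rfl fun i _ => by rw [haeq, smul_assoc]
    have hs0 : (s : A) ≠ 0 := nonZeroDivisors.ne_zero s.2
    obtain ⟨m, u, hu⟩ := IsDiscreteValuationRing.eq_unit_mul_pow_irreducible hs0 ht
    have heq' : algebraMap A B (↑u * t ^ m) * b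
        = ∑ i ∈ Finset.range n, algebraMap A B (if h : i < n then a ⟨i, h⟩ else 0) * π ^ i := by
      rw [← hu, heq, finconv]
    obtain ⟨a', ha'⟩ := span_lemma (algebraMap A B) t π n hπ0 ht hinj hloc htB m u b _ heq'
    rw [ha']
    refine Submodule.sum_mem _ fun j hj => ?_
    rw [← Algebra.smul_def]
    exact Submodule.smul_mem _ _ (Submodule.subset_span ⟨⟨j, Finset.mem_range.mp hj⟩, rfl⟩)
  constructor
  · rw [eq_top_iff]
    intro x _
    have hsub : Submodule.span A (Set.range fun i : Fin n => π ^ (i : ℕ))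
        ≤ Subalgebra.toSubmodule (Algebra.adjoin A {π}) := by
      rw [Submodule.span_le]
      rintro _ ⟨i, rfl⟩
      exact pow_mem (Algebra.subset_adjoin (Set.mem_singleton π)) _
    exact hsub (hspan x)
  · exact ⟨Module.Basis.mk liA (fun x _ => hspan x), fun i => Module.Basis.mk_apply _ _ _⟩
end

section
/- Let R be a commutative ring and A, B ∈ W(R) Witt vectors such that for every index i, A_i = 0 or B_i = 0. Then the Witt vector sum A + B has coordinates (A_0 + B_0, A_1 + B_1, A_2 + B_2, ...). -/
/-- Let `R` be a commutative ring and `A, B ∈ W(R)` (p-typical) Witt vectors such that for every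
index `i`, `A_i = 0` or `B_i = 0`.  Then the Witt vector sum `A + B` has coordinates
`(A_0 + B_0, A_1 + B_1, A_2 + B_2, …)`. -/
theorem stmt_11 (p : ℕ) [hp : Fact p.Prime] (R : Type*) [CommRing R]
    (A B : WittVector p R) (h : ∀ i, A.coeff i = 0 ∨ B.coeff i = 0) :
    ∀ i, (A + B).coeff i = A.coeff i + B.coeff i :=
  fun i => WittVector.coeff_add_of_disjoint i A B h
end

section
/- Let p be a prime and R a perfect ring of characteristic p (the Frobenius x ↦ x^p is bijective). Then the module of Kähler differentials Ω_{W(R)/ℤ_p} is uniquely p-divisible: multiplication by p is an automorphism of Ω_{W(R)/ℤ_p}. -/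
open WittVector KaehlerDifferential

set_option linter.unusedSectionVars false
set_option maxHeartbeats 1000000

namespace Stmt17Aux

variable (p : ℕ) [hp : Fact p.Prime] (R : Type*) [CommRing R] [CharP R p] [PerfectRing R p]

local notation "W" => WittVector p R
local notation "A" => MvPolynomial (Fin 2) ℤ_[p]

lemma pmul_inj : Function.Injective (fun x : W => (p : W) * x) := by
  intro x y h
  simp only [mul_comm] at h
  rw [← verschiebung_frobenius, ← verschiebung_frobenius] at h
  have h2 : frobenius x = frobenius y := by
    ext n
    have := congrArg (fun z : W => z.coeff (n + 1)) h
    simpa [verschiebung_coeff_succ] using this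
  exact (frobenius_bijective p R).injective h2

lemma coeff_pow_mul_eq_zero (n : ℕ) (y : W) {m : ℕ} (hm : m < n) :
    ((p : W) ^ n * y).coeff m = 0 := by
  induction n generalizing y m with
  | zero => omega
  | succ n ih =>
    have : (p : W) ^ (n + 1) * y = verschiebung (frobenius ((p : W) ^ n * y)) := by
      rw [verschiebung_frobenius]; ring
    rw [this]
    cases m with
    | zero => rw [verschiebung_coeff_zero]
    | succ m =>
      rw [verschiebung_coeff_succ, coeff_frobenius_charP, ih y (by omega), zero_pow hp.out.ne_zero]

lemma sep (x : W) (h : ∀ n, ∃ y : W, x = (p : W) ^ n * y) : x = 0 := by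
  ext m
  obtain ⟨y, hy⟩ := h (m + 1)
  rw [hy, coeff_pow_mul_eq_zero p R (m + 1) y (by omega), zero_coeff]

lemma ringHom_ext (f g : ℤ_[p] →+* W) : f = g := by
  refine RingHom.ext fun z => sub_eq_zero.mp ?_
  apply sep
  intro n
  obtain ⟨c, hc⟩ := Ideal.mem_span_singleton'.mp (PadicInt.appr_spec n z)
  refine ⟨f c - g c, ?_⟩
  have hz : z = (z.appr n : ℤ_[p]) + c * (p : ℤ_[p]) ^ n := by
    have := hc; linear_combination -this
  rw [hz]
  push_cast [map_add, map_mul, map_pow, map_natCast]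
  ring

lemma exists_frob (y : W) : ∃ c : W, frobenius y = y ^ p + (p : W) * c := by
  set z : W := frobenius y - y ^ p with hz
  have hz0 : z.coeff 0 = 0 := by
    have h2 : (y ^ p).coeff 0 = y.coeff 0 ^ p := by
      simpa using map_pow (WittVector.constantCoeff : W →+* R) y p
    have h3 : z.coeff 0 = (frobenius y).coeff 0 - (y ^ p).coeff 0 := by
      simpa using map_sub (WittVector.constantCoeff : W →+* R) (frobenius y) (y ^ p)
    rw [h3, h2, coeff_frobenius_charP, sub_self]
  set w : W := @WittVector.mk p R (fun n => z.coeff (n + 1)) with hw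
  have hVw : verschiebung w = z := by
    ext n
    cases n with
    | zero => rw [verschiebung_coeff_zero, hz0]
    | succ n => rw [verschiebung_coeff_succ, hw]; rfl
  obtain ⟨c, hc⟩ := (frobenius_bijective p R).surjective w
  refine ⟨c, ?_⟩
  have : verschiebung (frobenius c) = z := by rw [hc, hVw]
  rw [verschiebung_frobenius] at this
  rw [hz] at this
  linear_combination -this

lemma fermat (c : ℤ_[p]) : ∃ e : ℤ_[p], c ^ p = c + (p : ℤ_[p]) * e := by
  have h : PadicInt.toZMod (c ^ p - c) = 0 := by
    rw [map_sub, map_pow, ZMod.pow_card, sub_self]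
  have h2 : c ^ p - c ∈ Ideal.span {(p : ℤ_[p])} := by
    rw [← PadicInt.maximalIdeal_eq_span_p, ← PadicInt.ker_toZMod]
    exact h
  obtain ⟨e, he⟩ := Ideal.mem_span_singleton'.mp h2
  exact ⟨e, by linear_combination -he⟩

lemma omega_tf0 (ω : Ω[A⁄ℤ_[p]]) (h : (p : A) • ω = 0) : ω = 0 := by
  have hb := (KaehlerDifferential.mvPolynomialBasis ℤ_[p] (Fin 2)).repr.injective
  apply hb
  have := congrArg (KaehlerDifferential.mvPolynomialBasis ℤ_[p] (Fin 2)).repr h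
  rw [map_smul, map_zero] at this
  refine Finsupp.ext fun i => ?_
  have hi := congrArg (fun v => v i) this
  simp only [Finsupp.smul_apply, smul_eq_mul, Finsupp.coe_zero, Pi.zero_apply] at hi
  have hp0 : (p : A) ≠ 0 := by
    exact_mod_cast Nat.cast_ne_zero.mpr hp.out.ne_zero
  simpa [hp0] using mul_eq_zero.mp hi

lemma omega_tf {ω₁ ω₂ : Ω[A⁄ℤ_[p]]} (h : (p : A) • ω₁ = (p : A) • ω₂) : ω₁ = ω₂ := by
  have := omega_tf0 p (ω₁ - ω₂) (by rw [smul_sub, h, sub_self])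
  exact sub_eq_zero.mp this

lemma key_poly : ∃ Q : A, (p : A) * Q =
      (MvPolynomial.X 0 + MvPolynomial.X 1) ^ p - MvPolynomial.X 0 ^ p - MvPolynomial.X 1 ^ p ∧
    D ℤ_[p] A Q = ((MvPolynomial.X 0 + MvPolynomial.X 1 : A)) ^ (p - 1) •
        D ℤ_[p] A (MvPolynomial.X 0 + MvPolynomial.X 1)
      - (MvPolynomial.X 0 : A) ^ (p - 1) • D ℤ_[p] A (MvPolynomial.X 0)
      - (MvPolynomial.X 1 : A) ^ (p - 1) • D ℤ_[p] A (MvPolynomial.X 1) := by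
  obtain ⟨Q0, hQ0⟩ := exists_add_pow_prime_eq hp.out (MvPolynomial.X 0 : A) (MvPolynomial.X 1 : A)
  obtain ⟨Q, hQ⟩ : ∃ Q : A, (MvPolynomial.X 0 + MvPolynomial.X 1) ^ p =
      MvPolynomial.X 0 ^ p + MvPolynomial.X 1 ^ p + (p : A) * Q :=
    ⟨MvPolynomial.X 0 * MvPolynomial.X 1 * Q0, by rw [hQ0]; ring⟩
  refine ⟨Q, by linear_combination -hQ, ?_⟩
  apply omega_tf p
  rw [smul_sub, smul_sub]
  have hD : ∀ x : A, (p : A) • (x ^ (p - 1) • D ℤ_[p] A x) = D ℤ_[p] A (x ^ p) := by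
    intro x
    rw [Derivation.leibniz_pow, ← Nat.cast_smul_eq_nsmul A]
  rw [hD, hD, hD]
  have h2 : D ℤ_[p] A ((p : A) * Q) = (p : A) • D ℤ_[p] A Q := by
    rw [Derivation.leibniz, Derivation.map_natCast, smul_zero, add_zero]
  rw [← h2]
  have h3 : (p : A) * Q = (MvPolynomial.X 0 + MvPolynomial.X 1) ^ p
      - MvPolynomial.X 0 ^ p - MvPolynomial.X 1 ^ p := by linear_combination -hQ
  rw [h3, map_sub, map_sub]

variable [Algebra ℤ_[p] (WittVector p R)]

lemma key_W (a b : W) :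
    ∃ q : W,
      (p : W) * q = (a + b) ^ p - a ^ p - b ^ p ∧
      D ℤ_[p] W q
        = (a + b) ^ (p - 1) • D ℤ_[p] W (a + b)
          - a ^ (p - 1) • D ℤ_[p] W a
          - b ^ (p - 1) • D ℤ_[p] W b := by
  obtain ⟨Q, hQ1, hQ2⟩ := key_poly p
  let f : A →ₐ[ℤ_[p]] W := MvPolynomial.aeval ![a, b]
  letI : Algebra A W := f.toRingHom.toAlgebra
  haveI : IsScalarTower ℤ_[p] A W := IsScalarTower.of_algebraMap_eq fun c => (f.commutes c).symm
  haveI : SMulCommClass ℤ_[p] A W := ⟨fun c q w => by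
    show c • (f q * w) = f q * (c • w)
    rw [Algebra.smul_def, Algebra.smul_def]
    ring⟩
  have halg : ∀ x : A, algebraMap A W x = f x := fun _ => rfl
  have ha : f (MvPolynomial.X 0) = a := by simp [f]
  have hb : f (MvPolynomial.X 1) = b := by simp [f]
  let m := KaehlerDifferential.map ℤ_[p] ℤ_[p] A W
  have hsm : ∀ (x : A) (ω : Ω[W⁄ℤ_[p]]), x • ω = f x • ω := by
    intro x ω
    rw [← halg, algebraMap_smul]
  refine ⟨f Q, ?_, ?_⟩
  · have := congrArg f hQ1
    simpa [map_sub, map_pow, map_add, map_mul, map_natCast, ha, hb] using this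
  · have h := congrArg m hQ2
    rw [map_sub, map_sub, map_smul, map_smul, map_smul, KaehlerDifferential.map_D,
      KaehlerDifferential.map_D, KaehlerDifferential.map_D, KaehlerDifferential.map_D,
      hsm, hsm, hsm] at h
    rw [halg, halg, halg, halg] at h
    rw [map_pow, map_pow, map_pow, map_add, ha, hb] at h
    exact h

noncomputable def σ : WittVector p R ≃+* WittVector p R := (frobeniusEquiv p R).symm

lemma sigma_algebraMap (c : ℤ_[p]) :
    σ p R (algebraMap ℤ_[p] W c) = algebraMap ℤ_[p] W c :=
  RingHom.congr_fun
    (ringHom_ext p R (((σ p R).toRingHom).comp (algebraMap ℤ_[p] W)) (algebraMap ℤ_[p] W)) c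

lemma exists_r (x : W) : ∃ c : W, (p : W) * c = x - (σ p R x) ^ p := by
  obtain ⟨c, hc⟩ := exists_frob p R (σ p R x)
  have hfs : frobenius (σ p R x) = x := (frobeniusEquiv p R).apply_symm_apply x
  rw [hfs] at hc
  exact ⟨c, by linear_combination -hc⟩

noncomputable def rfn (x : W) : W := (exists_r p R x).choose

lemma hr (x : W) : (p : W) * rfn p R x = x - (σ p R x) ^ p := (exists_r p R x).choose_spec

lemma r_eq {x c : W} (h : (p : W) * c = x - (σ p R x) ^ p) : rfn p R x = c :=
  pmul_inj p R (by show (p : W) * _ = (p : W) * _; rw [hr, h])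

lemma hpsmul (w : W) : (p : W) * w = (p : ℤ_[p]) • w := by
  rw [Algebra.smul_def, map_natCast]

noncomputable def d' : Derivation ℤ_[p] (WittVector p R) (Ω[(WittVector p R)⁄ℤ_[p]]) where
  toFun x := (σ p R x) ^ (p - 1) • D ℤ_[p] W (σ p R x) + D ℤ_[p] W (rfn p R x)
  map_add' x y := by
    obtain ⟨q, hq1, hq2⟩ := key_W p R (σ p R x) (σ p R y)
    have hσ : σ p R (x + y) = σ p R x + σ p R y := map_add _ _ _
    have hrxy : rfn p R (x + y) = rfn p R x + rfn p R y - q := by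
      apply r_eq
      rw [hσ]
      linear_combination hr p R x + hr p R y - hq1
    simp only [hσ, hrxy, map_sub, map_add, hq2, smul_add]
    abel
  map_smul' c x := by
    obtain ⟨e, he⟩ := fermat p c
    have hσ : σ p R (c • x) = c • σ p R x := by
      rw [Algebra.smul_def, Algebra.smul_def, map_mul, sigma_algebraMap]
    have hrc : rfn p R (c • x) = c • rfn p R x - e • (σ p R x) ^ p := by
      apply r_eq
      rw [hσ, smul_pow]
      have h1 : (p : ℤ_[p]) • rfn p R x = x - (σ p R x) ^ p := by
        rw [← hpsmul, hr]
      rw [mul_sub, hpsmul, hpsmul, smul_comm (p : ℤ_[p]) c, h1, smul_smul,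
        show (p : ℤ_[p]) * e = c ^ p - c from by linear_combination -he, smul_sub, sub_smul]
      abel
    rw [hσ, hrc, Derivation.map_sub, Derivation.map_smul, Derivation.map_smul]
    rw [smul_pow, Derivation.map_smul]
    rw [Derivation.leibniz_pow]
    simp only [RingHom.id_apply]
    rw [← Nat.cast_smul_eq_nsmul ℤ_[p] p]
    rw [smul_comm (c ^ (p - 1) • (σ p R x) ^ (p - 1) : WittVector p R) c, smul_smul e]
    rw [show e * (p : ℤ_[p]) = c ^ p - c by linear_combination -he]
    rw [smul_assoc (c ^ (p - 1)) ((σ p R x) ^ (p - 1))]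
    rw [smul_smul c (c ^ (p - 1))]
    rw [show c * c ^ (p - 1) = c ^ p by rw [← pow_succ', Nat.sub_add_cancel hp.out.one_le]]
    module
  map_one_eq_zero' := by
    simp only [LinearMap.coe_mk, AddHom.coe_mk]
    have hσ : σ p R 1 = 1 := map_one _
    have hr1 : rfn p R 1 = 0 := by
      apply r_eq
      rw [hσ]; ring
    simp only [hσ, hr1, Derivation.map_one_eq_zero, map_zero, smul_zero, add_zero]
  leibniz' x y := by
    simp only [LinearMap.coe_mk, AddHom.coe_mk]
    obtain ⟨u, hu⟩ : ∃ u, u = rfn p R x := ⟨_, rfl⟩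
    obtain ⟨v, hv⟩ : ∃ v, v = rfn p R y := ⟨_, rfl⟩
    obtain ⟨a, ha⟩ : ∃ a, a = σ p R x := ⟨_, rfl⟩
    obtain ⟨b, hb⟩ : ∃ b, b = σ p R y := ⟨_, rfl⟩
    have hσ : σ p R (x * y) = a * b := by rw [ha, hb]; exact map_mul _ _ _
    have hx : x = a ^ p + (p : W) * u := by rw [ha, hu]; linear_combination -hr p R x
    have hy : y = b ^ p + (p : W) * v := by rw [hb, hv]; linear_combination -hr p R y
    have hrxy : rfn p R (x * y) = a ^ p * v + b ^ p * u + (p : W) * (u * v) := by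
      apply r_eq
      rw [hσ, hx, hy]
      ring
    rw [hσ, hrxy, ← hu, ← hv, ← ha, ← hb]
    rw [hx, hy]
    have hpow : ∀ w : W, w ^ p = w ^ (p - 1) * w := fun w => by
      rw [← pow_succ, Nat.sub_add_cancel hp.out.one_le]
    simp only [Derivation.leibniz, Derivation.leibniz_pow, Derivation.map_natCast,
      map_add, smul_zero, add_zero, mul_pow]
    simp only [hpow]
    module

lemma p_smul_d' (x : W) : (p : W) • d' p R x = D ℤ_[p] W x := by
  have hx : x = (σ p R x) ^ p + (p : W) * rfn p R x := by linear_combination -(hr p R x)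
  have hd : d' p R x = (σ p R x) ^ (p - 1) • D ℤ_[p] W (σ p R x) + D ℤ_[p] W (rfn p R x) := rfl
  rw [hd]
  conv_rhs => rw [hx]
  rw [map_add, Derivation.leibniz, Derivation.map_natCast, smul_zero, add_zero,
    Derivation.leibniz_pow, ← Nat.cast_smul_eq_nsmul (WittVector p R) p, smul_add]

end Stmt17Aux

/-- Let `p` be a prime and `R` a perfect ring of characteristic `p`.  Then the module of Kähler
differentials `Ω[W(R)⁄ℤ_p]` is uniquely `p`-divisible: multiplication by `p` is an
automorphism of it.  (`W(R)` is a `ℤ_p`-algebra; the statement holds for the canonical, indeed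
any, such algebra structure.) -/
theorem stmt_17 (p : ℕ) [hp : Fact p.Prime] (R : Type*) [CommRing R] [CharP R p]
    [PerfectRing R p] [Algebra ℤ_[p] (WittVector p R)] :
    Function.Bijective
      (fun ω : Ω[(WittVector p R)⁄ℤ_[p]] => (p : ℤ_[p]) • ω) := by
  classical
  let L := (Stmt17Aux.d' p R).liftKaehlerDifferential
  have hL : ∀ ω : Ω[(WittVector p R)⁄ℤ_[p]], (p : WittVector p R) • L ω = ω := by
    intro ω
    have hmem : ω ∈ (⊤ : Submodule (WittVector p R) (Ω[(WittVector p R)⁄ℤ_[p]])) := trivial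
    rw [← KaehlerDifferential.span_range_derivation] at hmem
    induction hmem using Submodule.span_induction with
    | mem ω' hω' =>
      obtain ⟨x, rfl⟩ := hω'
      rw [show L (KaehlerDifferential.D ℤ_[p] (WittVector p R) x) = Stmt17Aux.d' p R x from
        Derivation.liftKaehlerDifferential_comp_D _ _]
      exact Stmt17Aux.p_smul_d' p R x
    | zero => simp
    | add ω₁ ω₂ h₁ h₂ ih₁ ih₂ => rw [map_add, smul_add, ih₁, ih₂]
    | smul w ω' hω' ih => rw [map_smul, smul_comm, ih]
  have hconv : ∀ ω : Ω[(WittVector p R)⁄ℤ_[p]],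
      (p : ℤ_[p]) • ω = (p : WittVector p R) • ω := by
    intro ω
    rw [← map_natCast (algebraMap ℤ_[p] (WittVector p R)) p, algebraMap_smul]
  constructor
  · intro ω₁ ω₂ h
    simp only [hconv] at h
    have h2 := congrArg L h
    rw [map_smul, map_smul] at h2
    rw [← hL ω₁, ← hL ω₂, h2]
  · intro ω
    exact ⟨L ω, by simpa [hconv] using hL ω⟩
end

section
/- Let p be a prime, m, n natural numbers, and write (x_1 + ... + x_n)^{p^m} = Σ_{i_1+...+i_n = p^m} a_{i_1,...,i_n} x_1^{i_1} ... x_n^{i_n} with multinomial coefficients a_{i_1,...,i_n} = p^m! / (i_1! ... i_n!). Then for every j with i_j > 0, v_p(a_{i_1,...,i_n}) + v_p(i_j) ≥ m, where v_p is the p-adic valuation. -/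
/-!
Splitting off the `j`-th index, `a_{i₁,…,iₙ} = C(p^m, i_j) · a'` where `a'` is the multinomial
coefficient of the remaining indices. By Kummer's theorem
`v_p(C(p^m, k)) + v_p(k) = m` for `0 < k ≤ p^m`, and the factor `a'` can only increase the
valuation.
-/

open Finset

namespace Nat

theorem multinomial_eq_choose_mul_multinomial_erase {α : Type*} [DecidableEq α] {s : Finset α}
    {a : α} (f : α → ℕ) (ha : a ∈ s) :
    multinomial s f = (∑ i ∈ s, f i).choose (f a) * multinomial (s.erase a) f := by
  conv_lhs => rw [← insert_erase ha]
  rw [multinomial_insert (notMem_erase a s), add_sum_erase s f ha]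

theorem padicValNat_choose_prime_pow_add_padicValNat {p n k : ℕ} (hp : p.Prime)
    (hkn : k ≤ p ^ n) (hk0 : k ≠ 0) :
    padicValNat p ((p ^ n).choose k) + padicValNat p k = n := by
  rw [← factorization_def _ hp, ← factorization_def _ hp]
  exact factorization_choose_prime_pow_add_factorization hp hkn hk0

end Nat

open Finset in
/-- For the multinomial coefficients `a_{i₁,…,iₙ} = (p^m)! / (i₁! ⋯ iₙ!)` appearing in
`(x₁ + ⋯ + xₙ)^(p^m) = ∑ a_{i₁,…,iₙ} x₁^{i₁} ⋯ xₙ^{iₙ}`, for every `j` with `i_j > 0` one has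
`v_p(a_{i₁,…,iₙ}) + v_p(i_j) ≥ m`. -/
theorem stmt_18 (p m n : ℕ) (hp : p.Prime) (i : Fin n → ℕ)
    (hsum : ∑ j, i j = p ^ m) (j : Fin n) (hj : 0 < i j) :
    m ≤ padicValNat p (Nat.multinomial Finset.univ i) + padicValNat p (i j) := by
  have := Fact.mk hp
  have hle : i j ≤ p ^ m := hsum ▸ single_le_sum (fun _ _ => Nat.zero_le _) (mem_univ j)
  have hkummer := Nat.padicValNat_choose_prime_pow_add_padicValNat hp hle hj.ne'
  rw [Nat.multinomial_eq_choose_mul_multinomial_erase i (mem_univ j), hsum,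
    padicValNat.mul (Nat.choose_pos hle).ne' (Nat.multinomial_pos _ _).ne']
  omega
end

section
/- Fix a prime p and let S_n ∈ ℤ[X_0,...,X_n;Y_0,...,Y_n] be the universal addition polynomials for p-typical Witt vectors. Then the polynomial S_n(X_0, X_1^p, X_2^{p^2}, ..., X_n^{p^n}; Y_0, Y_1^p, ..., Y_n^{p^n}) is homogeneous of degree p^n in the variables X_0,...,X_n,Y_0,...,Y_n. -/
/-!
Give the variable `X_k` weight `p ^ k`. The Witt polynomial `W_n` is weighted homogeneous of
weight `p ^ n`, and so, inductively, is `W_n⁻¹ = p^{-n} (X_n - ∑_{i<n} p^i (W_i⁻¹)^{p^{n-i}})`,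
the polynomial expressing `X_n` through `W_0, …, W_n`. Over `ℚ` the structure polynomial is
`S_n = W_n⁻¹(Φ(W_0), …, Φ(W_n))`, and `Φ(W_k)` has weight `d p^k` when `Φ` is homogeneous of
degree `d`, so `S_n` has weight `d p^n`; the integral `S_n` has the same coefficients. For
addition `d = 1`, and substituting `X_k ↦ X_k^{p^k}` turns weight into ordinary degree.
-/

open MvPolynomial

namespace MvPolynomial.IsWeightedHomogeneous

variable {σ τ M R : Type*} [AddCommMonoid M]

section CommSemiring

variable [CommSemiring R]

theorem bind₁ {w : σ → M} {w' : τ → M} {m : M} {φ : MvPolynomial σ R}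
    {f : σ → MvPolynomial τ R} (hf : ∀ i, (f i).IsWeightedHomogeneous w' (w i))
    (hφ : φ.IsWeightedHomogeneous w m) :
    (bind₁ f φ).IsWeightedHomogeneous w' m := by
  rw [φ.as_sum, map_sum]
  refine sum _ _ _ fun d hd => ?_
  have hweight : ∑ i ∈ d.support, d i • w i = m := hφ (mem_support_iff.mp hd)
  rw [bind₁_monomial, ← hweight]
  exact (prod _ _ _ fun i _ => (hf i).pow (d i)).C_mul _

theorem rename {w : σ → M} {w' : τ → M} {m : M} {φ : MvPolynomial σ R}
    {g : σ → τ} (hg : ∀ i, w' (g i) = w i) (hφ : φ.IsWeightedHomogeneous w m) :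
    (rename g φ).IsWeightedHomogeneous w' m := by
  rw [rename_eq_aeval]
  exact hφ.bind₁ fun i => hg i ▸ isWeightedHomogeneous_X R w' (g i)

end CommSemiring

theorem const_mul_weight [CommSemiring R] {w : σ → ℕ} {m : ℕ} {φ : MvPolynomial σ R}
    (hφ : φ.IsWeightedHomogeneous w m) (c : ℕ) :
    φ.IsWeightedHomogeneous (fun i => c * w i) (c * m) := fun d hd => by
  rw [← hφ hd, Finsupp.weight_apply, Finsupp.weight_apply, Finsupp.sum, Finsupp.sum,
    Finset.mul_sum]
  simp only [smul_eq_mul, Nat.mul_left_comm]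

theorem of_map {S : Type*} [CommSemiring R] [CommSemiring S] {f : R →+* S}
    (hf : Function.Injective f) {w : σ → M} {m : M} {φ : MvPolynomial σ R}
    (h : (map f φ).IsWeightedHomogeneous w m) : φ.IsWeightedHomogeneous w m := fun d hd =>
  h (by rwa [coeff_map, ne_eq, map_eq_zero_iff f hf])

end MvPolynomial.IsWeightedHomogeneous

section Witt

variable (p : ℕ) (R : Type*) [CommRing R]

theorem isWeightedHomogeneous_wittPolynomial (n : ℕ) :
    (wittPolynomial p R n).IsWeightedHomogeneous (p ^ ·) (p ^ n) := by
  refine IsWeightedHomogeneous.sum _ _ _ fun i hi => isWeightedHomogeneous_monomial _ _ _ ?_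
  rw [Finsupp.weight_apply, Finsupp.sum_single_index (by simp), smul_eq_mul,
    ← pow_add, Nat.sub_add_cancel (Nat.lt_succ_iff.mp (Finset.mem_range.mp hi))]

theorem isWeightedHomogeneous_xInTermsOfW [Invertible (p : R)] (n : ℕ) :
    (xInTermsOfW p R n).IsWeightedHomogeneous (p ^ ·) (p ^ n) := by
  induction n using Nat.strong_induction_on with
  | _ n ih =>
    have hterm : ∀ i < n, (C ((p : R) ^ i) * xInTermsOfW p R i ^ p ^ (n - i)).IsWeightedHomogeneous
        (p ^ ·) (p ^ n) := fun i hi => by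
      have := ((ih i hi).pow (p ^ (n - i))).C_mul ((p : R) ^ i)
      rwa [smul_eq_mul, ← pow_add, Nat.sub_add_cancel hi.le] at this
    rw [xInTermsOfW_eq, ← add_zero (p ^ n)]
    exact ((isWeightedHomogeneous_X R _ n).sub (IsWeightedHomogeneous.sum _ _ _
      fun i hi => hterm i (Finset.mem_range.mp hi))).mul (isWeightedHomogeneous_C _ _)

variable [Fact p.Prime] {idx : Type*}

theorem isWeightedHomogeneous_wittStructureRat {Φ : MvPolynomial idx ℚ} {d : ℕ}
    (hΦ : Φ.IsHomogeneous d) (n : ℕ) :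
    (wittStructureRat p Φ n).IsWeightedHomogeneous (fun v : idx × ℕ => p ^ v.2) (d * p ^ n) := by
  refine ((isWeightedHomogeneous_xInTermsOfW p ℚ n).const_mul_weight d).bind₁ fun k => ?_
  have hΦk : Φ.IsWeightedHomogeneous (fun _ => p ^ k) (d * p ^ k) := by
    simpa [mul_comm] using hΦ.const_mul_weight (p ^ k)
  exact hΦk.bind₁ fun i =>
    (isWeightedHomogeneous_wittPolynomial p ℚ k).rename (g := Prod.mk i) fun _ => rfl

theorem isWeightedHomogeneous_wittStructureInt {Φ : MvPolynomial idx ℤ} {d : ℕ}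
    (hΦ : Φ.IsHomogeneous d) (n : ℕ) :
    (wittStructureInt p Φ n).IsWeightedHomogeneous (fun v : idx × ℕ => p ^ v.2) (d * p ^ n) := by
  refine IsWeightedHomogeneous.of_map (f := Int.castRingHom ℚ) Int.cast_injective ?_
  rw [map_wittStructureInt]
  exact isWeightedHomogeneous_wittStructureRat p (hΦ.map _) n

end Witt

open MvPolynomial in
/-- Let `S_n` be the universal addition polynomials for `p`-typical Witt vectors, characterized
by `W_n(S_0, …, S_n) = W_n(X_0, …, X_n) + W_n(Y_0, …, Y_n)`.  Then the polynomial
`S_n(X_0, X_1^p, …, X_n^{p^n}; Y_0, Y_1^p, …, Y_n^{p^n})` (i.e. `S_n` after the substitution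
`Z_{(i,k)} ↦ Z_{(i,k)}^{p^k}`) is homogeneous of degree `p^n`. -/
theorem stmt_19 (p : ℕ) [hp : Fact p.Prime] (n : ℕ) :
    (bind₁ (fun v : Fin 2 × ℕ => (X v : MvPolynomial (Fin 2 × ℕ) ℤ) ^ p ^ v.2)
        (wittStructureInt p (X 0 + X 1 : MvPolynomial (Fin 2) ℤ) n)).IsHomogeneous (p ^ n) := by
  have hadd : (X 0 + X 1 : MvPolynomial (Fin 2) ℤ).IsHomogeneous 1 :=
    (isHomogeneous_X ℤ 0).add (isHomogeneous_X ℤ 1)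
  have hS := isWeightedHomogeneous_wittStructureInt p hadd n
  rw [one_mul] at hS
  exact hS.bind₁ fun v => isHomogeneous_X_pow v (p ^ v.2)
end
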